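/- arXiv:2409.03486 — 4 statements merged into one kernel-verified Lean document; each statement's English description precedes it below -/
import Mathlib

section
/- For all integers k ≥ 0 and all m ≥ −1, the sequence 𝔠 satisfies 𝔠_{m+kτ} = 𝔠_m · (𝔠_{τ−1})^k. -/
/-!
The complete quotients `ξ m = (P m + √N) / Q m` satisfy `1 < ξ m` and `ξ m = a m + 1 / ξ (m + 1)`,
and such a sequence is determined by its partial quotients: two of them drift apart by a factor
of at least `4` every two steps while staying at distance `< 1`. Periodicity of `(a n)_{n ≥ 1}`
therefore gives `ξ (τ + 1) = ξ 1`.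

The conjugates `𝔡 m = p m - q m √N` of `𝔠 m` satisfy `𝔡 m * ξ (m + 1) + 𝔡 (m - 1) = 0` (the
conjugate of `√N = [a 0; …, a m, ξ (m + 1)]`); comparing `m = τ` with `m = 0` gives the
conjugate of `𝔠 τ = 𝔠 0 𝔠 (τ - 1)`, and conjugating back inside `ℤ[√N]` gives the identity itself.
Then `m ↦ 𝔠 (m + τ)` and `m ↦ 𝔠 m 𝔠 (τ - 1)` satisfy the same second order recurrence with the
same values at `-1` and `0`, so they agree, and induction on `k` finishes.
-/

def IsCompleteQuotients (a : ℕ → ℤ) (x : ℕ → ℝ) : Prop :=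
  ∀ n, 1 < x n ∧ x n = a n + (x (n + 1))⁻¹

namespace IsCompleteQuotients

variable {a : ℕ → ℤ} {x y : ℕ → ℝ}

theorem one_le_partialQuotient (hx : IsCompleteQuotients a x) (n : ℕ) : 1 ≤ a n := by
  have hinv : (x (n + 1))⁻¹ < 1 := inv_lt_one_of_one_lt₀ (hx (n + 1)).1
  have : (0 : ℝ) < a n := by linarith [(hx n).1, (hx n).2]
  exact_mod_cast this

theorem two_le_mul_succ (hx : IsCompleteQuotients a x) (n : ℕ) : 2 ≤ x n * x (n + 1) := by
  have ha : (1 : ℝ) ≤ a n := by exact_mod_cast hx.one_le_partialQuotient n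
  have h₁ := (hx (n + 1)).1
  have : x n * x (n + 1) = a n * x (n + 1) + 1 := by
    rw [(hx n).2, add_mul, inv_mul_cancel₀ (zero_lt_one.trans h₁).ne']
  nlinarith

theorem abs_sub_lt_one (hx : IsCompleteQuotients a x) (hy : IsCompleteQuotients a y) (n : ℕ) :
    |x n - y n| < 1 := by
  have hx₁ := inv_lt_one_of_one_lt₀ (hx (n + 1)).1
  have hy₁ := inv_lt_one_of_one_lt₀ (hy (n + 1)).1
  have hx₀ : 0 < (x (n + 1))⁻¹ := inv_pos.mpr (zero_lt_one.trans (hx (n + 1)).1)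
  have hy₀ : 0 < (y (n + 1))⁻¹ := inv_pos.mpr (zero_lt_one.trans (hy (n + 1)).1)
  rw [(hx n).2, (hy n).2, abs_lt]
  constructor <;> linarith

theorem abs_sub_mul (hx : IsCompleteQuotients a x) (hy : IsCompleteQuotients a y) (n : ℕ) :
    |x n - y n| * (x (n + 1) * y (n + 1)) = |x (n + 1) - y (n + 1)| := by
  have hx₀ : 0 < x (n + 1) := zero_lt_one.trans (hx (n + 1)).1
  have hy₀ : 0 < y (n + 1) := zero_lt_one.trans (hy (n + 1)).1
  rw [← abs_of_pos (mul_pos hx₀ hy₀), ← abs_mul, (hx n).2, (hy n).2, ← abs_neg]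
  congr 1
  field_simp
  ring

theorem abs_sub_mul_four_pow_le (hx : IsCompleteQuotients a x) (hy : IsCompleteQuotients a y)
    (k n : ℕ) : |x n - y n| * 4 ^ k ≤ |x (n + 2 * k) - y (n + 2 * k)| := by
  induction k generalizing n with
  | zero => simp
  | succ k ih =>
    have h₁ := hx.abs_sub_mul hy n
    have h₂ := hx.abs_sub_mul hy (n + 1)
    have hx₂ := hx.two_le_mul_succ (n + 1)
    have hy₂ := hy.two_le_mul_succ (n + 1)
    have hfour : 4 ≤ (x (n + 1) * y (n + 1)) * (x (n + 2) * y (n + 2)) := by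
      linarith [mul_le_mul hx₂ hy₂ zero_le_two (zero_le_two.trans hx₂)]
    calc |x n - y n| * 4 ^ (k + 1)
        ≤ |x n - y n| * ((x (n + 1) * y (n + 1)) * (x (n + 2) * y (n + 2))) * 4 ^ k := by
          rw [pow_succ', ← mul_assoc]; gcongr
      _ = |x (n + 2) - y (n + 2)| * 4 ^ k := by rw [← h₂, ← h₁]; ring
      _ ≤ |x (n + 2 * (k + 1)) - y (n + 2 * (k + 1))| := by
          rw [show n + 2 * (k + 1) = n + 2 + 2 * k by ring]; exact ih (n + 2)

theorem apply_zero_eq (hx : IsCompleteQuotients a x) (hy : IsCompleteQuotients a y) :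
    x 0 = y 0 := by
  by_contra hne
  have hpos : 0 < |x 0 - y 0| := abs_pos.mpr (sub_ne_zero.mpr hne)
  obtain ⟨k, hk⟩ := pow_unbounded_of_one_lt |x 0 - y 0|⁻¹ (by norm_num : (1 : ℝ) < 4)
  have := (hx.abs_sub_mul_four_pow_le hy k 0).trans (hx.abs_sub_lt_one hy _).le
  rw [inv_lt_iff_one_lt_mul₀ hpos] at hk
  linarith

end IsCompleteQuotients

theorem isCompleteQuotients_shift {a : ℤ → ℤ} {ξ : ℤ → ℝ}
    (hξ : ∀ m, 0 ≤ m → 1 < ξ m ∧ ξ m = a m + (ξ (m + 1))⁻¹) (m₀ : ℤ) (hm₀ : 0 ≤ m₀) :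
    IsCompleteQuotients (fun n ↦ a (m₀ + n)) (fun n ↦ ξ (m₀ + n)) := fun n ↦ by
  simpa [add_assoc] using hξ (m₀ + n) (by omega)

theorem completeQuotients_period {a : ℤ → ℤ} {ξ : ℤ → ℝ}
    (hξ : ∀ m, 0 ≤ m → 1 < ξ m ∧ ξ m = a m + (ξ (m + 1))⁻¹) {τ : ℕ}
    (hper : ∀ n : ℤ, 1 ≤ n → a (n + τ) = a n) : ξ (τ + 1) = ξ 1 := by
  have hx := isCompleteQuotients_shift hξ (1 + τ) (by positivity)
  have ha : (fun n : ℕ ↦ a (1 + τ + n)) = fun n : ℕ ↦ a (1 + n) :=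
    funext fun n ↦ by rw [add_right_comm]; exact hper _ (by omega)
  rw [ha] at hx
  simpa [add_comm] using hx.apply_zero_eq (isCompleteQuotients_shift hξ 1 zero_le_one)

theorem one_lt_sqrt_of_not_isSquare {N : ℕ} (hN : ¬IsSquare N) : 1 < √(N : ℝ) := by
  have h₂ : 2 ≤ N := by
    by_contra! h
    interval_cases N
    · exact hN ⟨0, rfl⟩
    · exact hN ⟨1, rfl⟩
  rw [Real.lt_sqrt zero_le_one, one_pow]
  exact_mod_cast h₂

theorem pqa_step {s : ℝ} (hs : Irrational s) {P Q a P' Q' : ℤ} (hQ : 0 < Q) (hP : P < s)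
    (hPQ : Q < P + s) (ha : a = ⌊(P + s) / Q⌋) (hP' : P' = a * Q - P)
    (hQ' : (Q' * Q : ℝ) = s ^ 2 - P' ^ 2) :
    (0 < Q' ∧ P' < s ∧ Q' < P' + s) ∧ (P + s) / Q = a + ((P' + s) / Q')⁻¹ := by
  have hQ₀ : (0 : ℝ) < Q := by exact_mod_cast hQ
  have hirr : Irrational ((P + s) / Q) := (hs.intCast_add P).div_intCast hQ.ne'
  have hfloor_lt : (a : ℝ) < (P + s) / Q :=
    ha ▸ (Int.floor_le _).lt_of_ne (hirr.ne_int _).symm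
  have hlt_floor : (P + s) / Q < a + 1 := ha ▸ Int.lt_floor_add_one _
  have ha₁ : (1 : ℝ) ≤ a := by
    rw [ha]; exact_mod_cast Int.le_floor.mpr (by rw [Int.cast_one, le_div_iff₀ hQ₀]; linarith)
  have hP'R : (P' : ℝ) = a * Q - P := by exact_mod_cast hP'
  have hr : s - P' = Q * ((P + s) / Q - a) := by rw [hP'R]; field_simp; ring
  have hr₀ : 0 < s - P' := by rw [hr]; nlinarith
  have hrQ : s - P' < Q := by rw [hr]; nlinarith
  have hP's : (Q : ℝ) < P' + s := by rw [hP'R]; nlinarith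
  have hQQ' : (Q' : ℝ) * Q = (s - P') * (P' + s) := by rw [hQ']; ring
  have hQ'₀ : (0 : ℝ) < Q' := pos_of_mul_pos_left (hQQ' ▸ mul_pos hr₀ (by linarith)) hQ₀.le
  refine ⟨⟨by exact_mod_cast hQ'₀, by linarith, by nlinarith⟩, ?_⟩
  have hne : (P' + s : ℝ) ≠ 0 := by linarith
  rw [inv_div]
  field_simp
  linear_combination (P' + s) * hP'R - hQQ'

noncomputable def completeQuotient (N : ℕ) (P Q : ℤ → ℤ) (m : ℤ) : ℝ := (P m + √N) / Q m

theorem completeQuotient_spec {N : ℕ} (hN : ¬IsSquare N) {a P Q : ℤ → ℤ}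
    (hP0 : P 0 = 0) (hQ0 : Q 0 = 1)
    (ha : ∀ m : ℤ, 0 ≤ m → a m = ⌊((P m : ℝ) + √N) / (Q m : ℝ)⌋)
    (hPrec : ∀ m : ℤ, 0 ≤ m → P (m + 1) = a m * Q m - P m)
    (hQrec : ∀ m : ℤ, 0 ≤ m → Q (m + 1) * Q m = (N : ℤ) - P (m + 1) ^ 2) (m : ℤ) (hm : 0 ≤ m) :
    1 < completeQuotient N P Q m ∧
      completeQuotient N P Q m = a m + (completeQuotient N P Q (m + 1))⁻¹ := by
  have hs : Irrational √N := irrational_sqrt_natCast_iff.mpr hN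
  have step : ∀ m, 0 ≤ m → (0 < Q m ∧ P m < √N ∧ Q m < P m + √N) →
      (0 < Q (m + 1) ∧ P (m + 1) < √N ∧ Q (m + 1) < P (m + 1) + √N) ∧
        (P m + √N) / Q m = a m + ((P (m + 1) + √N) / Q (m + 1))⁻¹ := by
    rintro m hm ⟨hQ, hP, hPQ⟩
    refine pqa_step hs hQ hP hPQ (ha m hm) (hPrec m hm) ?_
    rw [Real.sq_sqrt (Nat.cast_nonneg N)]
    exact_mod_cast hQrec m hm
  have hinv : ∀ m, 0 ≤ m → 0 < Q m ∧ P m < √N ∧ Q m < P m + √N := by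
    intro m hm
    induction m, hm using Int.leInduction with
    | base =>
      have := one_lt_sqrt_of_not_isSquare hN
      simp only [hP0, hQ0, Int.cast_zero, Int.cast_one, zero_add]
      exact ⟨one_pos, by positivity, this⟩
    | succ m hm ih => exact (step m hm ih).1
  obtain ⟨hQ, -, hPQ⟩ := hinv m hm
  exact ⟨(one_lt_div (by exact_mod_cast hQ)).mpr hPQ, (step m hm (hinv m hm)).2⟩

theorem convergent_recurrence {a p q : ℤ → ℤ}
    (hprec : ∀ m : ℤ, 1 ≤ m → p m = a m * p (m - 1) + p (m - 2))
    (hqrec : ∀ m : ℤ, 1 ≤ m → q m = a m * q (m - 1) + q (m - 2)) (r : ℝ) (m : ℤ) (hm : 1 ≤ m) :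
    (p m + q m * r : ℝ) = a m * (p (m - 1) + q (m - 1) * r) + (p (m - 2) + q (m - 2) * r) := by
  rw [hprec m hm, hqrec m hm]
  push_cast
  ring

theorem mul_succ_add_eq_zero_of_recurrence {a : ℤ → ℤ} {ξ D : ℤ → ℝ}
    (hξ : ∀ n, 0 ≤ n → ξ n = a n + (ξ (n + 1))⁻¹) (hξ₀ : ∀ n, 1 ≤ n → ξ n ≠ 0)
    (hD : ∀ n, 1 ≤ n → D n = a n * D (n - 1) + D (n - 2)) (h₀ : D 0 * ξ 1 + D (-1) = 0)
    (n : ℤ) (hn : 0 ≤ n) : D n * ξ (n + 1) + D (n - 1) = 0 := by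
  induction n, hn using Int.leInduction with
  | base => exact h₀
  | succ n hn ih =>
    have hinv := mul_inv_cancel₀ (hξ₀ (n + 1 + 1) (by omega))
    rw [hD (n + 1) (by omega), add_sub_cancel_right, show n + 1 - 2 = n - 1 by ring]
    linear_combination
      ξ (n + 1 + 1) * ih - ξ (n + 1 + 1) * D n * hξ (n + 1) (by omega) - D n * hinv

theorem conj_convergent_period {N : ℕ} {a p q : ℤ → ℤ} {ξ : ℤ → ℝ}
    (hξ : ∀ m, 0 ≤ m → 1 < ξ m ∧ ξ m = a m + (ξ (m + 1))⁻¹) (hξ₀ : ξ 0 = √N)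
    (hp1 : p (-1) = 1) (hp0 : p 0 = a 0) (hq1 : q (-1) = 0) (hq0 : q 0 = 1)
    (hprec : ∀ m : ℤ, 1 ≤ m → p m = a m * p (m - 1) + p (m - 2))
    (hqrec : ∀ m : ℤ, 1 ≤ m → q m = a m * q (m - 1) + q (m - 2)) {τ : ℕ}
    (hτ : ξ (τ + 1) = ξ 1) :
    (p τ - q τ * √N : ℝ) = (p 0 - q 0 * √N) * (p (τ - 1) - q (τ - 1) * √N) := by
  set D : ℤ → ℝ := fun m ↦ p m + q m * -√N
  have hξ₁ : ξ 1 ≠ 0 := (zero_lt_one.trans (hξ 1 zero_le_one).1).ne'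
  have hD := mul_succ_add_eq_zero_of_recurrence (fun n hn ↦ (hξ n hn).2)
    (fun n hn ↦ (zero_lt_one.trans (hξ n (by omega)).1).ne')
    (convergent_recurrence hprec hqrec _) (D := D) (by
      have h₀ := (hξ 0 le_rfl).2
      rw [hξ₀, zero_add] at h₀
      simp only [D, hp0, hq0, hp1, hq1, Int.cast_one, Int.cast_zero]
      linear_combination -ξ 1 * h₀ - mul_inv_cancel₀ hξ₁)
  have hτ' := hD τ (by positivity)
  have h₀ := hD 0 le_rfl
  rw [hτ] at hτ'
  simp only [zero_add, zero_sub, D, hp1, hq1, Int.cast_one, Int.cast_zero] at h₀ hτ' ⊢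
  apply mul_right_cancel₀ hξ₁
  linear_combination hτ' - D (τ - 1) * h₀

theorem eq_of_second_order_recurrence {R : Type*} [Semiring R] {c u v : ℤ → R}
    (hu : ∀ m, 1 ≤ m → u m = c m * u (m - 1) + u (m - 2))
    (hv : ∀ m, 1 ≤ m → v m = c m * v (m - 1) + v (m - 2))
    (hm₁ : u (-1) = v (-1)) (h₀ : u 0 = v 0) (m : ℤ) (hm : -1 ≤ m) : u m = v m := by
  have key : ∀ m, 0 ≤ m → u (m - 1) = v (m - 1) ∧ u m = v m := by
    intro m hm
    induction m, hm using Int.leInduction with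
    | base => exact ⟨hm₁, h₀⟩
    | succ m hm ih =>
      refine ⟨by rw [add_sub_cancel_right]; exact ih.2, ?_⟩
      rw [hu (m + 1) (by omega), hv (m + 1) (by omega), add_sub_cancel_right,
        show m + 1 - 2 = m - 1 by ring, ih.1, ih.2]
  simpa using (key (m + 1) (by omega)).1

theorem convergent_add_period {N : ℕ} {a p q : ℤ → ℤ} {τ : ℕ}
    (hper : ∀ n : ℤ, 1 ≤ n → a (n + τ) = a n) (hp1 : p (-1) = 1) (hq1 : q (-1) = 0)
    (hprec : ∀ m : ℤ, 1 ≤ m → p m = a m * p (m - 1) + p (m - 2))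
    (hqrec : ∀ m : ℤ, 1 ≤ m → q m = a m * q (m - 1) + q (m - 2))
    (hτ : (p τ + q τ * √N : ℝ) = (p 0 + q 0 * √N) * (p (τ - 1) + q (τ - 1) * √N))
    (m : ℤ) (hm : -1 ≤ m) :
    (p (m + τ) + q (m + τ) * √N : ℝ) = (p m + q m * √N) * (p (τ - 1) + q (τ - 1) * √N) :=
  eq_of_second_order_recurrence (c := fun m ↦ (a m : ℝ))
    (u := fun m ↦ (p (m + τ) + q (m + τ) * √N : ℝ))
    (v := fun m ↦ (p m + q m * √N) * (p (τ - 1) + q (τ - 1) * √N))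
    (fun m hm ↦ by
      rw [show m - 1 + τ = m + τ - 1 by ring, show m - 2 + τ = m + τ - 2 by ring, ← hper m hm]
      exact convergent_recurrence hprec hqrec _ _ (by omega))
    (fun m hm ↦ by rw [convergent_recurrence hprec hqrec _ _ hm]; ring)
    (by simp [hp1, hq1, neg_add_eq_sub]) (by simpa using hτ) m hm

theorem add_mul_sqrt_eq_mul_of_sub_mul_sqrt {N : ℕ} (hN : ¬IsSquare N) {x y x₀ y₀ x₁ y₁ : ℤ}
    (h : (x - y * √N : ℝ) = (x₀ - y₀ * √N) * (x₁ - y₁ * √N)) :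
    (x + y * √N : ℝ) = (x₀ + y₀ * √N) * (x₁ + y₁ * √N) := by
  have hN0 : (0 : ℤ) ≤ N := Int.natCast_nonneg N
  have hNsq : ∀ n : ℤ, (N : ℤ) ≠ n * n := fun n hn => hN ⟨n.natAbs, by zify; simp [hn]⟩
  have hstar : star (⟨x, y⟩ : ℤ√N) = star (⟨x₀, y₀⟩ * ⟨x₁, y₁⟩) := by
    apply Zsqrtd.toReal_injective hN0 hNsq
    simp only [map_mul, Zsqrtd.toReal_apply, star_mul', Zsqrtd.star_mk, Int.cast_natCast]
    push_cast
    linear_combination h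
  have := congrArg (Zsqrtd.toReal hN0) (star_injective hstar)
  simpa only [map_mul, Zsqrtd.toReal_apply, Int.cast_natCast] using this

theorem stmt_0_general
    (N : ℕ) (hNsq : ¬ IsSquare N)
    (a P Q : ℤ → ℤ)
    (hP0 : P 0 = 0) (hQ0 : Q 0 = 1)
    (ha : ∀ m : ℤ, 0 ≤ m → a m = ⌊((P m : ℝ) + Real.sqrt N) / (Q m : ℝ)⌋)
    (hPrec : ∀ m : ℤ, 0 ≤ m → P (m + 1) = a m * Q m - P m)
    (hQrec : ∀ m : ℤ, 0 ≤ m → Q (m + 1) * Q m = (N : ℤ) - P (m + 1) ^ 2)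
    (τ : ℕ)
    (hper : ∀ n : ℤ, 1 ≤ n → a (n + τ) = a n)
    (p q : ℤ → ℤ)
    (hp1 : p (-1) = 1) (hp0 : p 0 = a 0)
    (hq1 : q (-1) = 0) (hq0 : q 0 = 1)
    (hprec : ∀ m : ℤ, 1 ≤ m → p m = a m * p (m - 1) + p (m - 2))
    (hqrec : ∀ m : ℤ, 1 ≤ m → q m = a m * q (m - 1) + q (m - 2))
    :
    ∀ (k : ℕ) (m : ℤ), -1 ≤ m →
      ((p (m + (k : ℤ) * (τ : ℤ)) : ℝ) + (q (m + (k : ℤ) * (τ : ℤ)) : ℝ) * Real.sqrt N)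
        = ((p m : ℝ) + (q m : ℝ) * Real.sqrt N)
          * (((p ((τ : ℤ) - 1) : ℝ) + (q ((τ : ℤ) - 1) : ℝ) * Real.sqrt N)) ^ k := by
  have hξ := completeQuotient_spec hNsq hP0 hQ0 ha hPrec hQrec
  have hξ₀ : completeQuotient N P Q 0 = √N := by simp [completeQuotient, hP0, hQ0]
  have hconj := conj_convergent_period hξ hξ₀ hp1 hp0 hq1 hq0 hprec hqrec
    (completeQuotients_period hξ hper)
  have hshift := convergent_add_period hper hp1 hq1 hprec hqrec
    (add_mul_sqrt_eq_mul_of_sub_mul_sqrt hNsq hconj)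
  intro k
  induction k with
  | zero => simp
  | succ k ih =>
    intro m hm
    rw [show m + (k + 1 : ℕ) * τ = m + τ + k * τ by push_cast; ring, ih (m + τ) (by omega),
      hshift m hm, pow_succ']
    ring

theorem stmt_0
    (N : ℕ) (hN : 0 < N) (hNsq : ¬ IsSquare N)
    (a P Q : ℤ → ℤ)
    (hP0 : P 0 = 0) (hQ0 : Q 0 = 1)
    (ha : ∀ m : ℤ, 0 ≤ m → a m = ⌊((P m : ℝ) + Real.sqrt N) / (Q m : ℝ)⌋)
    (hPrec : ∀ m : ℤ, 0 ≤ m → P (m + 1) = a m * Q m - P m)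
    (hQrec : ∀ m : ℤ, 0 ≤ m → Q (m + 1) * Q m = (N : ℤ) - P (m + 1) ^ 2)
    (τ : ℕ) (hτ : 0 < τ)
    (hper : ∀ n : ℤ, 1 ≤ n → a (n + τ) = a n)
    (hmin : ∀ τ' : ℕ, 0 < τ' → (∀ n : ℤ, 1 ≤ n → a (n + τ') = a n) → τ ≤ τ')
    (p q : ℤ → ℤ)
    (hp1 : p (-1) = 1) (hp0 : p 0 = a 0)
    (hq1 : q (-1) = 0) (hq0 : q 0 = 1)
    (hprec : ∀ m : ℤ, 1 ≤ m → p m = a m * p (m - 1) + p (m - 2))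
    (hqrec : ∀ m : ℤ, 1 ≤ m → q m = a m * q (m - 1) + q (m - 2))
    :
    ∀ (k : ℕ) (m : ℤ), -1 ≤ m →
      ((p (m + (k : ℤ) * (τ : ℤ)) : ℝ) + (q (m + (k : ℤ) * (τ : ℤ)) : ℝ) * Real.sqrt N)
        = ((p m : ℝ) + (q m : ℝ) * Real.sqrt N)
          * (((p ((τ : ℤ) - 1) : ℝ) + (q ((τ : ℤ) - 1) : ℝ) * Real.sqrt N)) ^ k :=
  stmt_0_general N hNsq a P Q hP0 hQ0 ha hPrec hQrec τ hper p q hp1 hp0 hq1 hq0 hprec hqrec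
end

section
/- For all m with −1 ≤ m ≤ τ−1, the following two identities hold: p_{τ−m−2} = (−1)^{m−1} p_{τ−1} p_m + (−1)^m N q_{τ−1} q_m, and q_{τ−m−2} = (−1)^m p_{τ−1} q_m + (−1)^{m−1} q_{τ−1} p_m. -/
/-!
The complete quotients `ωₘ = (Pₘ + √N) / Qₘ` satisfy `ωₘ = aₘ + 1 / ωₘ₊₁` with `ωₘ > 1` for
`m ≥ 1`, so by uniqueness of infinite continued fractions the periodicity of `(aₙ)` gives
`ω_{τ+1} = ω₁`, and by irrationality `(P, Q)` returns to `(P₁, Q₁)`. The numbers `βₘ = -1 / ω̄ₘ`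
obey the reversed recurrence `βₘ₊₁ = aₘ + 1 / βₘ` and exceed one; comparing integer parts in
`β_{τ+1} = β₁ = a₀ + √N = 2a₀ + 1 / ω₁` gives `a_τ = 2a₀` and `β_τ = ω₁`, and then inductively
`β_{τ-k} = ω_{k+1}`: the word `a₁ ⋯ a_{τ-1}` is a palindrome. Hence `ω_τ = a₀ + √N`, and
`√N = (ω_τ p_{τ-1} + p_{τ-2}) / (ω_τ q_{τ-1} + q_{τ-2})` yields, comparing rational and irrational
parts, the case `m = 0`. Both sides of each identity, as functions of `m`, satisfy
`xₘ = xₘ₋₂ - aₘ xₘ₋₁` (the left side thanks to the palindrome) and agree at `m = -1, 0`.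
-/

theorem Irrational.int_add_int_mul_inj {s : ℝ} (hs : Irrational s) {a b c d : ℤ}
    (h : a + b * s = c + d * s) : a = c ∧ b = d := by
  have hbd : b = d := by
    by_contra hne
    have hne' : ((b - d : ℤ) : ℝ) ≠ 0 := by exact_mod_cast sub_ne_zero.2 hne
    refine (irrational_iff_ne_rational s).1 hs (c - a) (b - d) (sub_ne_zero.2 hne) ?_
    rw [eq_div_iff hne']
    push_cast
    linarith
  subst hbd
  exact ⟨by exact_mod_cast add_right_cancel h, rfl⟩

theorem int_add_inv_inj {b b' : ℤ} {y y' : ℝ} (hy : 1 < y) (hy' : 1 < y')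
    (h : b + y⁻¹ = b' + y'⁻¹) : b = b' ∧ y = y' := by
  have floor_eq {c : ℤ} {z : ℝ} (hz : 1 < z) : ⌊(c : ℝ) + z⁻¹⌋ = c := by
    rw [Int.floor_intCast_add, Int.floor_eq_zero_iff.2 ⟨by positivity, inv_lt_one_of_one_lt₀ hz⟩,
      add_zero]
  have hb : b = b' := by rw [← floor_eq (c := b) hy, h, floor_eq hy']
  subst hb
  exact ⟨rfl, inv_injective (add_left_cancel h)⟩

theorem abs_sub_eq_of_eq_add_inv {b x x' y y' : ℝ} (hx : x = b + x'⁻¹) (hy : y = b + y'⁻¹)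
    (hx' : 0 < x') (hy' : 0 < y') : |x' - y'| = |x - y| * (x' * y') := by
  rw [hx, hy, add_sub_add_left_eq_sub, ← abs_of_pos (mul_pos hx' hy'), ← abs_mul,
    abs_sub_comm]
  congr 1
  field_simp

theorem eq_of_forall_eq_int_add_inv {x y : ℕ → ℝ} (b : ℕ → ℤ) (hx1 : ∀ k, 1 < x k)
    (hy1 : ∀ k, 1 < y k) (hx : ∀ k, x k = b k + (x (k + 1))⁻¹)
    (hy : ∀ k, y k = b k + (y (k + 1))⁻¹) :
    x 0 = y 0 := by
  have hpos (z : ℕ → ℝ) (hz : ∀ k, 1 < z k) k : 0 < z k := one_pos.trans (hz k)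
  have inv_mem (z : ℕ → ℝ) (hz : ∀ k, 1 < z k) k : 0 < (z k)⁻¹ ∧ (z k)⁻¹ < 1 :=
    ⟨inv_pos.2 (hpos z hz k), inv_lt_one_of_one_lt₀ (hz k)⟩
  have one_le_b k : (1 : ℝ) ≤ b k := by
    have : (0 : ℝ) < b k := by linarith [hx k, hx1 k, inv_mem x hx1 (k + 1)]
    exact_mod_cast (show (0 : ℤ) < b k by exact_mod_cast this)
  -- `z k * z (k + 1) = b k * z (k + 1) + 1 > 2`, so every two steps multiply the distance by `> 4`
  have two_lt (z : ℕ → ℝ) (hz1 : ∀ k, 1 < z k) (hz : ∀ k, z k = b k + (z (k + 1))⁻¹) k :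
      2 < z k * z (k + 1) := by
    have : z k * z (k + 1) = b k * z (k + 1) + 1 := by
      rw [hz k, add_mul, inv_mul_cancel₀ (hpos z hz1 (k + 1)).ne']
    nlinarith [one_le_b k, hz1 (k + 1)]
  set d : ℕ → ℝ := fun k => |x k - y k|
  have d_succ k : d (k + 1) = d k * (x (k + 1) * y (k + 1)) :=
    abs_sub_eq_of_eq_add_inv (hx k) (hy k) (hpos x hx1 _) (hpos y hy1 _)
  have d_lt_one k : d k < 1 := by
    rw [abs_sub_lt_iff, hx k, hy k]
    constructor <;> linarith [inv_mem x hx1 (k + 1), inv_mem y hy1 (k + 1)]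
  have grow n : 4 ^ n * d 0 ≤ d (2 * n) := by
    induction n with
    | zero => simp
    | succ n ih =>
      have h4 : 4 < (x (2 * n + 1) * x (2 * n + 2)) * (y (2 * n + 1) * y (2 * n + 2)) := by
        nlinarith [two_lt x hx1 hx (2 * n + 1), two_lt y hy1 hy (2 * n + 1)]
      have hd : d (2 * (n + 1)) = d (2 * n) *
          ((x (2 * n + 1) * x (2 * n + 2)) * (y (2 * n + 1) * y (2 * n + 2))) := by
        rw [show 2 * (n + 1) = 2 * n + 1 + 1 by ring, d_succ, d_succ]; ring
      rw [hd, pow_succ]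
      nlinarith [abs_nonneg (x (2 * n) - y (2 * n))]
  by_contra hne
  have hd0 : 0 < d 0 := abs_pos.2 (sub_ne_zero.2 hne)
  obtain ⟨n, hn⟩ := pow_unbounded_of_one_lt (d 0)⁻¹ (by norm_num : (1 : ℝ) < 4)
  have := (inv_lt_iff_one_lt_mul₀ hd0).1 hn
  linarith [grow n, d_lt_one (2 * n)]

theorem eq_of_two_step_recurrence {R : Type*} [Add R] [Mul R] (c f g : ℤ → R) {lo hi : ℤ}
    (hf : ∀ m, lo + 2 ≤ m → m ≤ hi → f m = c m * f (m - 1) + f (m - 2))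
    (hg : ∀ m, lo + 2 ≤ m → m ≤ hi → g m = c m * g (m - 1) + g (m - 2))
    (h₀ : f lo = g lo) (h₁ : f (lo + 1) = g (lo + 1)) :
    ∀ m, lo ≤ m → m ≤ hi → f m = g m := by
  suffices key : ∀ m, lo ≤ m → m ≤ hi → f m = g m ∧ (m + 1 ≤ hi → f (m + 1) = g (m + 1)) from
    fun m hm hm' => (key m hm hm').1
  intro m hm
  induction m, hm using Int.leInduction with
  | base => exact fun _ => ⟨h₀, fun _ => h₁⟩
  | succ m hm ih =>
    intro hm'
    obtain ⟨e₀, e₁⟩ := ih (by omega)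
    refine ⟨e₁ hm', fun hm'' => ?_⟩
    rw [hf _ (by omega) hm'', hg _ (by omega) hm'', show m + 1 + 1 - 1 = m + 1 by ring,
      show m + 1 + 1 - 2 = m by ring, e₀, e₁ hm']

theorem Int.negOnePow_sub_one (m : ℤ) : (m - 1).negOnePow = -m.negOnePow := by
  rw [Int.negOnePow_sub, Int.negOnePow_one, mul_neg_one]

section Convergents

variable {a p q : ℤ → ℤ}

theorem value_mul_denom_eq_num (hp₁ : p (-1) = 1) (hp₀ : p 0 = a 0) (hq₁ : q (-1) = 0)
    (hq₀ : q 0 = 1) (hp : ∀ m, 1 ≤ m → p m = a m * p (m - 1) + p (m - 2))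
    (hq : ∀ m, 1 ≤ m → q m = a m * q (m - 1) + q (m - 2))
    {ω : ℤ → ℝ} (hω : ∀ m, 0 ≤ m → ω m = a m + (ω (m + 1))⁻¹) (hω₀ : ∀ m, 1 ≤ m → ω m ≠ 0)
    (n : ℤ) (hn : 1 ≤ n) : ω 0 * (ω n * q (n - 1) + q (n - 2)) = ω n * p (n - 1) + p (n - 2) := by
  induction n, hn using Int.leInduction with
  | base =>
    norm_num [hp₁, hp₀, hq₁, hq₀, hω 0 le_rfl, add_mul, inv_mul_cancel₀ (hω₀ 1 le_rfl)]
    ring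
  | succ n hn ih =>
    rw [hω n (by omega)] at ih
    have hne := hω₀ (n + 1) (by omega)
    rw [show n + 1 - 1 = n by ring, show n + 1 - 2 = n - 1 by ring, hp n (by omega),
      hq n (by omega)]
    push_cast
    field_simp at ih
    linear_combination ih

theorem eq_negOnePow_mul_of_palindrome {x y : ℤ → ℤ} {T : ℤ}
    (hpal : ∀ m, 1 ≤ m → m ≤ T - 1 → a (T - m) = a m)
    (hx : ∀ m, 1 ≤ m → x m = a m * x (m - 1) + x (m - 2))
    (hy : ∀ m, 1 ≤ m → y m = a m * y (m - 1) + y (m - 2))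
    (hlast : x (T - 1) = -y (-1)) (hbase : x (T - 2) = y 0) :
    ∀ m, -1 ≤ m → m ≤ T - 1 → x (T - m - 2) = m.negOnePow * y m := by
  refine eq_of_two_step_recurrence (fun m => -a m) _ _ (fun m hm hm' => ?_)
    (fun m hm _ => ?_) ?_ ?_
  · have := hx (T - m) (by omega)
    rw [hpal m (by omega) hm'] at this
    rw [show T - (m - 1) - 2 = T - m - 1 by ring, show T - (m - 2) - 2 = T - m by ring]
    linear_combination -this
  · rw [hy m (by omega), show m - 2 = m - 1 - 1 by ring, Int.negOnePow_sub_one (m - 1),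
      Int.negOnePow_sub_one m, neg_neg, Units.val_neg]
    ring
  · rw [show T - -1 - 2 = T - 1 by ring, hlast]; simp
  · simpa using hbase

end Convergents

structure IsSqrtContFracAlgorithm (N : ℕ) (a P Q : ℤ → ℤ) : Prop where
  not_isSquare : ¬ IsSquare N
  P_zero : P 0 = 0
  Q_zero : Q 0 = 1
  a_eq_floor : ∀ m, 0 ≤ m → a m = ⌊((P m : ℝ) + √N) / Q m⌋
  P_succ : ∀ m, 0 ≤ m → P (m + 1) = a m * Q m - P m
  Q_succ_mul : ∀ m, 0 ≤ m → Q (m + 1) * Q m = N - P (m + 1) ^ 2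

/-- `-1 / ω̄ₘ`, where `ω̄ₘ = (Pₘ - √N) / Qₘ` is the conjugate of the complete quotient `ωₘ`. -/
noncomputable def reversedQuotient (N : ℕ) (P Q : ℤ → ℤ) (m : ℤ) : ℝ := Q m / (√N - P m)

namespace IsSqrtContFracAlgorithm

variable {N : ℕ} {a P Q : ℤ → ℤ} (h : IsSqrtContFracAlgorithm N a P Q)
include h

local notation "ω" => completeQuotient N P Q
local notation "β" => reversedQuotient N P Q

theorem irrational_sqrt : Irrational √N := irrational_sqrt_natCast_iff.2 h.not_isSquare

theorem one_lt_sqrt : 1 < √N := by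
  have h0 : N ≠ 0 := by rintro rfl; exact h.not_isSquare ⟨0, rfl⟩
  have h1 : N ≠ 1 := by rintro rfl; exact h.not_isSquare ⟨1, rfl⟩
  rw [Real.lt_sqrt zero_le_one]
  exact_mod_cast (show 1 < N by omega)

theorem sub_sq_ne_zero (z : ℤ) : (N : ℤ) - z ^ 2 ≠ 0 := by
  intro hz
  exact h.not_isSquare (Int.isSquare_natCast_iff.1 ⟨z, by linear_combination hz⟩)

theorem Q_ne_zero {m : ℤ} (hm : 0 ≤ m) : Q m ≠ 0 := by
  obtain rfl | hm := hm.eq_or_lt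
  · simp [h.Q_zero]
  · intro hQ
    have := h.Q_succ_mul (m - 1) (by omega)
    rw [sub_add_cancel, hQ, zero_mul] at this
    exact h.sub_sq_ne_zero _ this.symm

theorem sqrt_add_ne_zero (z : ℤ) : (z : ℝ) + √N ≠ 0 := (h.irrational_sqrt.intCast_add z).ne_zero

theorem sqrt_sub_ne_zero (z : ℤ) : √N - z ≠ 0 := (h.irrational_sqrt.sub_intCast z).ne_zero

theorem completeQuotient_zero : ω 0 = √N := by simp [completeQuotient, h.P_zero, h.Q_zero]

theorem reversedQuotient_zero : β 0 = (√N)⁻¹ := by simp [reversedQuotient, h.P_zero, h.Q_zero]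

theorem completeQuotient_eq_add_inv {m : ℤ} (hm : 0 ≤ m) : ω m = a m + (ω (m + 1))⁻¹ := by
  have hQ : (Q m : ℝ) ≠ 0 := by exact_mod_cast h.Q_ne_zero hm
  have hP := h.sqrt_add_ne_zero (P (m + 1))
  have hs : √N ^ 2 = N := Real.sq_sqrt (Nat.cast_nonneg N)
  have hPs : (P (m + 1) : ℝ) = a m * Q m - P m := by exact_mod_cast h.P_succ m hm
  have hQs : (Q (m + 1) * Q m : ℝ) = N - P (m + 1) ^ 2 := by exact_mod_cast h.Q_succ_mul m hm
  rw [completeQuotient, completeQuotient, inv_div]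
  field_simp
  linear_combination hs - hQs + (P (m + 1) + √N) * hPs

theorem reversedQuotient_succ {m : ℤ} (hm : 0 ≤ m) : β (m + 1) = a m + (β m)⁻¹ := by
  have hQ : (Q m : ℝ) ≠ 0 := by exact_mod_cast h.Q_ne_zero hm
  have hP := h.sqrt_sub_ne_zero (P (m + 1))
  have hs : √N ^ 2 = N := Real.sq_sqrt (Nat.cast_nonneg N)
  have hPs : (P (m + 1) : ℝ) = a m * Q m - P m := by exact_mod_cast h.P_succ m hm
  have hQs : (Q (m + 1) * Q m : ℝ) = N - P (m + 1) ^ 2 := by exact_mod_cast h.Q_succ_mul m hm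
  rw [reversedQuotient, reversedQuotient, inv_div]
  field_simp
  linear_combination hQs - hs + (√N - P (m + 1)) * hPs

theorem a_eq_floor_completeQuotient {m : ℤ} (hm : 0 ≤ m) : a m = ⌊ω m⌋ := h.a_eq_floor m hm

theorem one_lt_completeQuotient {m : ℤ} (hm : 1 ≤ m) : 1 < ω m := by
  have hirr : Irrational (ω (m - 1)) :=
    (h.irrational_sqrt.intCast_add _).div_intCast (h.Q_ne_zero (by omega))
  have hfract : (ω m)⁻¹ = Int.fract (ω (m - 1)) := by
    have hω := h.completeQuotient_eq_add_inv (m := m - 1) (by omega)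
    rw [sub_add_cancel] at hω
    rw [Int.fract, ← h.a_eq_floor_completeQuotient (by omega), hω, add_sub_cancel_left]
  rw [← inv_inv (ω m), one_lt_inv_iff₀, hfract]
  exact ⟨Int.fract_pos.2 (hirr.ne_int _), Int.fract_lt_one _⟩

theorem one_le_a {m : ℤ} (hm : 1 ≤ m) : 1 ≤ a m := by
  rw [h.a_eq_floor_completeQuotient (by omega), Int.le_floor]
  exact_mod_cast (h.one_lt_completeQuotient hm).le

theorem one_lt_reversedQuotient {m : ℤ} (hm : 1 ≤ m) : 1 < β m := by
  induction m, hm using Int.leInduction with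
  | base =>
    have ha₀ : (0 : ℝ) ≤ a 0 := by
      rw [h.a_eq_floor_completeQuotient le_rfl, h.completeQuotient_zero]
      exact_mod_cast Int.floor_nonneg.2 (Real.sqrt_nonneg N)
    have hβ₁ := h.reversedQuotient_succ le_rfl
    rw [zero_add, h.reversedQuotient_zero, inv_inv] at hβ₁
    rw [hβ₁]
    linarith [h.one_lt_sqrt]
  | succ m hm ih =>
    rw [h.reversedQuotient_succ (by omega)]
    have : (1 : ℝ) ≤ a m := by exact_mod_cast h.one_le_a hm
    linarith [inv_pos.2 (zero_lt_one.trans ih)]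

theorem reversedQuotient_eq_of_completeQuotient_eq {m n : ℤ} (hm : 0 ≤ m) (hn : 0 ≤ n)
    (hmn : ω m = ω n) : β m = β n := by
  have hQm : (Q m : ℝ) ≠ 0 := by exact_mod_cast h.Q_ne_zero hm
  have hQn : (Q n : ℝ) ≠ 0 := by exact_mod_cast h.Q_ne_zero hn
  rw [completeQuotient, completeQuotient, div_eq_div_iff hQm hQn] at hmn
  obtain ⟨hP, hQ⟩ := h.irrational_sqrt.int_add_int_mul_inj (a := P m * Q n) (b := Q n)
    (c := P n * Q m) (d := Q m) (by push_cast; linear_combination hmn)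
  rw [hQ] at hP
  simp [reversedQuotient, mul_right_cancel₀ (h.Q_ne_zero hm) hP, hQ]

theorem eq_of_reversedQuotient_succ_eq {m n : ℤ} (hm : 1 ≤ m) (hn : 0 ≤ n)
    (hmn : β (m + 1) = ω n) : a m = a n ∧ β m = ω (n + 1) :=
  int_add_inv_inj (h.one_lt_reversedQuotient hm) (h.one_lt_completeQuotient (by omega)) <| by
    rw [← h.reversedQuotient_succ (by omega), hmn, h.completeQuotient_eq_add_inv hn]

section Period

variable {τ : ℕ} (hper : ∀ n : ℤ, 1 ≤ n → a (n + τ) = a n)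
include hper

theorem completeQuotient_add_period {m : ℤ} (hm : 1 ≤ m) : ω (m + τ) = ω m := by
  simpa using eq_of_forall_eq_int_add_inv (x := fun k : ℕ => ω (m + τ + k))
    (y := fun k : ℕ => ω (m + k)) (fun k => a (m + k))
    (fun k => h.one_lt_completeQuotient (by omega)) (fun k => h.one_lt_completeQuotient (by omega))
    (fun k => by
      rw [← hper (m + k) (by omega), Nat.cast_succ, ← add_assoc, add_right_comm m]
      exact h.completeQuotient_eq_add_inv (by omega))
    (fun k => by simpa [add_assoc] using h.completeQuotient_eq_add_inv (m := m + k) (by omega))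

theorem a_period_and_reversedQuotient_period (hτ : 0 < τ) : a τ = 2 * a 0 ∧ β τ = ω 1 := by
  refine int_add_inv_inj (h.one_lt_reversedQuotient (by omega))
    (h.one_lt_completeQuotient le_rfl) ?_
  have hβ : β (τ + 1) = β 1 := by
    rw [add_comm]
    exact h.reversedQuotient_eq_of_completeQuotient_eq (by omega) zero_le_one
      (h.completeQuotient_add_period hper le_rfl)
  have hβ₁ := h.reversedQuotient_succ le_rfl
  have hω₀ := h.completeQuotient_eq_add_inv le_rfl
  rw [zero_add, h.reversedQuotient_zero, inv_inv] at hβ₁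
  rw [zero_add, h.completeQuotient_zero] at hω₀
  rw [← h.reversedQuotient_succ (by omega), hβ, hβ₁, hω₀]
  push_cast
  ring

theorem reversedQuotient_sub_eq (hτ : 0 < τ) {k : ℤ} (hk : 0 ≤ k) (hkτ : k ≤ τ - 1) :
    β (τ - k) = ω (k + 1) := by
  induction k, hk using Int.leInduction with
  | base => simpa using (h.a_period_and_reversedQuotient_period hper hτ).2
  | succ k hk ih =>
    have := h.eq_of_reversedQuotient_succ_eq (m := τ - (k + 1)) (n := k + 1) (by omega) (by omega)
      (by rw [show (τ : ℤ) - (k + 1) + 1 = τ - k by ring]; exact ih (by omega))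
    exact this.2

theorem a_sub_eq (hτ : 0 < τ) {m : ℤ} (hm : 1 ≤ m) (hmτ : m ≤ τ - 1) : a (τ - m) = a m :=
  (h.eq_of_reversedQuotient_succ_eq (m := τ - m) (n := m) (by omega) (by omega) <| by
    rw [show (τ : ℤ) - m + 1 = τ - (m - 1) by ring, h.reversedQuotient_sub_eq hper hτ (by omega)
      (by omega), sub_add_cancel]).1

theorem completeQuotient_period (hτ : 0 < τ) : ω τ = a 0 + √N := by
  have hω₀ := h.completeQuotient_eq_add_inv le_rfl
  rw [zero_add, h.completeQuotient_zero] at hω₀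
  rw [h.completeQuotient_eq_add_inv (by omega), add_comm (τ : ℤ),
    h.completeQuotient_add_period hper le_rfl, (h.a_period_and_reversedQuotient_period hper hτ).1,
    hω₀]
  push_cast
  ring

theorem convergents_at_period {p q : ℤ → ℤ} (hτ : 0 < τ) (hp₁ : p (-1) = 1) (hp₀ : p 0 = a 0)
    (hq₁ : q (-1) = 0) (hq₀ : q 0 = 1)
    (hp : ∀ m, 1 ≤ m → p m = a m * p (m - 1) + p (m - 2))
    (hq : ∀ m, 1 ≤ m → q m = a m * q (m - 1) + q (m - 2)) :
    N * q (τ - 1) = a 0 * p (τ - 1) + p (τ - 2) ∧ a 0 * q (τ - 1) + q (τ - 2) = p (τ - 1) := by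
  have hs : √N ^ 2 = N := Real.sq_sqrt (Nat.cast_nonneg N)
  have key := value_mul_denom_eq_num hp₁ hp₀ hq₁ hq₀ hp hq
    (fun m hm => h.completeQuotient_eq_add_inv hm)
    (fun m hm => (zero_lt_one.trans (h.one_lt_completeQuotient hm)).ne') τ (by omega)
  rw [h.completeQuotient_zero, h.completeQuotient_period hper hτ] at key
  refine h.irrational_sqrt.int_add_int_mul_inj ?_
  push_cast
  linear_combination key - q (τ - 1) * hs

end Period

end IsSqrtContFracAlgorithm

theorem stmt_3_general
    (N : ℕ) (hNsq : ¬ IsSquare N)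
    (a P Q : ℤ → ℤ)
    (hP0 : P 0 = 0) (hQ0 : Q 0 = 1)
    (ha : ∀ m : ℤ, 0 ≤ m → a m = ⌊((P m : ℝ) + Real.sqrt N) / (Q m : ℝ)⌋)
    (hPrec : ∀ m : ℤ, 0 ≤ m → P (m + 1) = a m * Q m - P m)
    (hQrec : ∀ m : ℤ, 0 ≤ m → Q (m + 1) * Q m = (N : ℤ) - P (m + 1) ^ 2)
    (τ : ℕ) (hτ : 0 < τ)
    (hper : ∀ n : ℤ, 1 ≤ n → a (n + τ) = a n)
    (p q : ℤ → ℤ)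
    (hp1 : p (-1) = 1) (hp0 : p 0 = a 0)
    (hq1 : q (-1) = 0) (hq0 : q 0 = 1)
    (hprec : ∀ m : ℤ, 1 ≤ m → p m = a m * p (m - 1) + p (m - 2))
    (hqrec : ∀ m : ℤ, 1 ≤ m → q m = a m * q (m - 1) + q (m - 2))
    :
    ∀ m : ℤ, -1 ≤ m → m ≤ (τ : ℤ) - 1 →
      p ((τ : ℤ) - m - 2)
          = ((m - 1).negOnePow : ℤ) * p ((τ : ℤ) - 1) * p m
            + (m.negOnePow : ℤ) * (N : ℤ) * q ((τ : ℤ) - 1) * q m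
        ∧ q ((τ : ℤ) - m - 2)
          = (m.negOnePow : ℤ) * p ((τ : ℤ) - 1) * q m
            + ((m - 1).negOnePow : ℤ) * q ((τ : ℤ) - 1) * p m := by
  have h : IsSqrtContFracAlgorithm N a P Q := ⟨hNsq, hP0, hQ0, ha, hPrec, hQrec⟩
  obtain ⟨hpτ, hqτ⟩ := h.convergents_at_period hper hτ hp1 hp0 hq1 hq0 hprec hqrec
  have hpal m := h.a_sub_eq hper hτ (m := m)
  intro m hm hmτ
  have hp := eq_negOnePow_mul_of_palindrome (y := fun m => N * q (τ - 1) * q m - p (τ - 1) * p m)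
    hpal hprec (fun m hm => by simp only [hprec m hm, hqrec m hm]; ring) (by simp [hp1, hq1])
    (by simp only [hp0, hq0]; linarith) m hm hmτ
  have hq := eq_negOnePow_mul_of_palindrome (y := fun m => p (τ - 1) * q m - q (τ - 1) * p m)
    hpal hqrec (fun m hm => by simp only [hprec m hm, hqrec m hm]; ring) (by simp [hp1, hq1])
    (by simp only [hp0, hq0]; linarith) m hm hmτ
  simp only [Int.negOnePow_sub_one, Units.val_neg]
  exact ⟨by linear_combination hp, by linear_combination hq⟩

theorem stmt_3
    (N : ℕ) (hN : 0 < N) (hNsq : ¬ IsSquare N)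
    (a P Q : ℤ → ℤ)
    (hP0 : P 0 = 0) (hQ0 : Q 0 = 1)
    (ha : ∀ m : ℤ, 0 ≤ m → a m = ⌊((P m : ℝ) + Real.sqrt N) / (Q m : ℝ)⌋)
    (hPrec : ∀ m : ℤ, 0 ≤ m → P (m + 1) = a m * Q m - P m)
    (hQrec : ∀ m : ℤ, 0 ≤ m → Q (m + 1) * Q m = (N : ℤ) - P (m + 1) ^ 2)
    (τ : ℕ) (hτ : 0 < τ)
    (hper : ∀ n : ℤ, 1 ≤ n → a (n + τ) = a n)
    (hmin : ∀ τ' : ℕ, 0 < τ' → (∀ n : ℤ, 1 ≤ n → a (n + τ') = a n) → τ ≤ τ')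
    (p q : ℤ → ℤ)
    (hp1 : p (-1) = 1) (hp0 : p 0 = a 0)
    (hq1 : q (-1) = 0) (hq0 : q 0 = 1)
    (hprec : ∀ m : ℤ, 1 ≤ m → p m = a m * p (m - 1) + p (m - 2))
    (hqrec : ∀ m : ℤ, 1 ≤ m → q m = a m * q (m - 1) + q (m - 2))
    :
    ∀ m : ℤ, -1 ≤ m → m ≤ (τ : ℤ) - 1 →
      p ((τ : ℤ) - m - 2)
          = ((m - 1).negOnePow : ℤ) * p ((τ : ℤ) - 1) * p m
            + (m.negOnePow : ℤ) * (N : ℤ) * q ((τ : ℤ) - 1) * q m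
        ∧ q ((τ : ℤ) - m - 2)
          = (m.negOnePow : ℤ) * p ((τ : ℤ) - 1) * q m
            + ((m - 1).negOnePow : ℤ) * q ((τ : ℤ) - 1) * p m :=
  stmt_3_general N hNsq a P Q hP0 hQ0 ha hPrec hQrec τ hτ hper p q hp1 hp0 hq1 hq0 hprec hqrec
end

section
/- The elements of the first block of the sequence (Q_n) satisfy the symmetry relation Q_m = Q_{τ−m} for all 0 ≤ m ≤ τ. -/
/-!
The complete quotients `ξₙ = (Pₙ + √N) / Qₙ` form the orbit of `√N` under `x ↦ 1 / fract x`.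
As `ξ₁` and `ξ_{τ+1}` have the same continued fraction digits they are equal, so
`(P, Q)` takes the same value at `τ + 1` as at `1`. The numbers `ηₙ = (Pₙ₊₁ + √N) / Qₙ` equal
`-1 / ξ̄ₙ₊₁`, and since `ξₙ` is reduced for `n ≥ 1` they satisfy `ηₙ = 1 / fract ηₙ₊₁`: they run
the same recursion backwards. Starting from `η_τ = η₀ = P₁ + √N`, which has the fractional part
of `√N`, this gives `η_{τ-j} = ξⱼ`, and comparing the two representations `(p + √N) / q` yields
`Q_{τ-j} = Qⱼ`.
-/

noncomputable def fractInv (x : ℝ) : ℝ := (Int.fract x)⁻¹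

lemma fractInv_intCast_add (m : ℤ) (x : ℝ) : fractInv (m + x) = fractInv x := by
  rw [fractInv, Int.fract_intCast_add, fractInv]

lemma fractInv_of_mem_Ico {x : ℝ} (hx : x ∈ Set.Ico 0 1) : fractInv x = x⁻¹ := by
  rw [fractInv, Int.fract_eq_self.2 hx]

lemma Irrational.fract_pos {x : ℝ} (hx : Irrational x) : 0 < Int.fract x :=
  Int.fract_pos.2 (hx.ne_int _)

lemma Irrational.one_lt_fractInv {x : ℝ} (hx : Irrational x) : 1 < fractInv x :=
  (one_lt_inv₀ hx.fract_pos).2 (Int.fract_lt_one x)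

lemma Irrational.fractInv {x : ℝ} (hx : Irrational x) : Irrational (fractInv x) :=
  (hx.sub_intCast _).inv

lemma GenContFract.get?_of_s_of_irrational {x : ℝ} (hx : Irrational x) (n : ℕ) :
    (GenContFract.of x).s.get? n = some ⟨1, ⌊fractInv^[n + 1] x⌋⟩ := by
  induction n generalizing x with
  | zero => exact of_s_head hx.fract_pos.ne'
  | succ n ih => exact (of_s_succ x n).trans (ih hx.fractInv)

lemma eq_of_floor_iterate_fractInv_eq {x y : ℝ} (hx : Irrational x) (hy : Irrational y)
    (h : ∀ n, ⌊fractInv^[n] x⌋ = ⌊fractInv^[n] y⌋) : x = y := by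
  have hxy : GenContFract.of x = GenContFract.of y := by
    refine GenContFract.ext ?_ (Stream'.Seq.ext fun n => ?_)
    · simpa [GenContFract.of_h_eq_floor] using h 0
    · rw [GenContFract.get?_of_s_of_irrational hx, GenContFract.get?_of_s_of_irrational hy, h]
  exact tendsto_nhds_unique (GenContFract.of_convergence x)
    (hxy ▸ GenContFract.of_convergence y)

lemma Irrational.eq_of_add_div_eq_add_div {s : ℝ} (hs : Irrational s) {p q p' q' : ℤ}
    (hq : q ≠ 0) (hq' : q' ≠ 0) (h : (p + s) / q = (p' + s) / q') : p = p' ∧ q = q' := by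
  rw [div_eq_div_iff (by exact_mod_cast hq) (by exact_mod_cast hq')] at h
  obtain rfl : q = q' := by
    by_contra hne
    refine hs ⟨(p' * q - p * q' : ℤ) / (q' - q : ℤ), ?_⟩
    have : ((q' - q : ℤ) : ℝ) ≠ 0 := by exact_mod_cast sub_ne_zero.2 (Ne.symm hne)
    push_cast at this ⊢
    rw [div_eq_iff this]
    linear_combination -h
  exact ⟨by exact_mod_cast add_right_cancel (mul_right_cancel₀ (by exact_mod_cast hq) h), rfl⟩

/-- In the names below, `quot` is the complete quotient `ξₙ = (Pₙ + √N) / Qₙ`, `conj` its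
conjugate `(Pₙ - √N) / Qₙ`, and `rev` is `ηₙ = (Pₙ₊₁ + √N) / Qₙ = -1 / conj (n + 1)`, which
satisfies the recursion of the `ξₙ` backwards. -/
structure IsSqrtCFExpansion (N : ℕ) (a P Q : ℕ → ℤ) : Prop where
  not_isSquare : ¬ IsSquare N
  P_zero : P 0 = 0
  Q_zero : Q 0 = 1
  a_eq_floor : ∀ n, a n = ⌊(P n + √N) / Q n⌋
  P_succ : ∀ n, P (n + 1) = a n * Q n - P n
  Q_succ_mul : ∀ n, Q (n + 1) * Q n = N - P (n + 1) ^ 2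

namespace IsSqrtCFExpansion

variable {N : ℕ} {a P Q : ℕ → ℤ}

lemma irrational_sqrt (h : IsSqrtCFExpansion N a P Q) : Irrational √N :=
  irrational_sqrt_natCast_iff.2 h.not_isSquare

lemma one_lt_sqrt (h : IsSqrtCFExpansion N a P Q) : 1 < √N := by
  have h0 : N ≠ 0 := by rintro rfl; exact h.not_isSquare ⟨0, rfl⟩
  have h1 : N ≠ 1 := by rintro rfl; exact h.not_isSquare ⟨1, rfl⟩
  exact Real.lt_sqrt_of_sq_lt (by norm_cast; omega)

lemma Q_ne_zero (h : IsSqrtCFExpansion N a P Q) (n : ℕ) : Q n ≠ 0 := by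
  induction n with
  | zero => simp [h.Q_zero]
  | succ n _ =>
    intro hQ
    have := h.Q_succ_mul n
    rw [hQ, zero_mul, eq_comm, sub_eq_zero] at this
    exact h.not_isSquare ⟨(P (n + 1)).natAbs, by zify; rw [this, sq]; simp⟩

lemma add_div_eq_sub (h : IsSqrtCFExpansion N a P Q) (s : ℝ) (n : ℕ) :
    (P (n + 1) + s) / Q n = a n - (P n - s) / Q n := by
  have hQ : (Q n : ℝ) ≠ 0 := by exact_mod_cast h.Q_ne_zero n
  rw [h.P_succ n]
  field_simp
  push_cast
  ring

lemma add_div_eq_neg_inv (h : IsSqrtCFExpansion N a P Q) {s : ℝ} (hs : s ^ 2 = N) (n : ℕ) :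
    (P (n + 1) + s) / Q n = -((P (n + 1) - s) / Q (n + 1))⁻¹ := by
  have hQ : (Q n : ℝ) ≠ 0 := by exact_mod_cast h.Q_ne_zero n
  have hQ' : (Q (n + 1) : ℝ) ≠ 0 := by exact_mod_cast h.Q_ne_zero (n + 1)
  have hQQ : (Q (n + 1) * Q n : ℝ) = N - P (n + 1) ^ 2 := by exact_mod_cast h.Q_succ_mul n
  have key : (P (n + 1) - s) * (P (n + 1) + s) = -(Q (n + 1) * Q n : ℝ) := by
    rw [hQQ]; linear_combination -hs
  have hps : (P (n + 1) - s : ℝ) ≠ 0 := by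
    rintro h0
    rw [h0, zero_mul, zero_eq_neg] at key
    exact mul_ne_zero hQ' hQ key
  field_simp
  linear_combination key

lemma quot_succ (h : IsSqrtCFExpansion N a P Q) (n : ℕ) :
    (P (n + 1) + √N) / Q (n + 1) = fractInv ((P n + √N) / Q n) := by
  have hs : (-√N) ^ 2 = N := by simp
  have h1 := h.add_div_eq_neg_inv hs n
  have h2 := h.add_div_eq_sub (-√N) n
  simp only [sub_neg_eq_add, ← sub_eq_add_neg] at h1 h2
  rw [fractInv, Int.fract, ← h.a_eq_floor, ← inv_inv ((P (n + 1) + √N) / Q (n + 1))]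
  congr 1
  linear_combination h1 - h2

lemma iterate_fractInv_quot (h : IsSqrtCFExpansion N a P Q) (k n : ℕ) :
    fractInv^[k] ((P n + √N) / Q n) = (P (n + k) + √N) / Q (n + k) := by
  induction k with
  | zero => rfl
  | succ k ih => rw [Function.iterate_succ_apply', ih, ← h.quot_succ]; rfl

lemma irrational_quot (h : IsSqrtCFExpansion N a P Q) (n : ℕ) :
    Irrational ((P n + √N) / Q n) :=
  (h.irrational_sqrt.intCast_add _).div_intCast (h.Q_ne_zero n)

lemma conj_succ (h : IsSqrtCFExpansion N a P Q) (n : ℕ) :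
    (P (n + 1) - √N) / Q (n + 1) = ((P n - √N) / Q n - a n)⁻¹ := by
  have hs : √N ^ 2 = N := by simp
  rw [← inv_inv ((P (n + 1) - √N) / Q (n + 1))]
  congr 1
  linear_combination h.add_div_eq_neg_inv hs n - h.add_div_eq_sub (√N) n

lemma conj_sub_lt_neg_one (h : IsSqrtCFExpansion N a P Q) (n : ℕ) :
    (P n - √N) / Q n - a n < -1 := by
  induction n with
  | zero =>
    have ha : (0 : ℝ) ≤ a 0 := by
      rw [h.a_eq_floor, h.P_zero, h.Q_zero]; simp
    simp only [h.P_zero, h.Q_zero]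
    push_cast
    linarith [h.one_lt_sqrt]
  | succ n ih =>
    have hconj : (P (n + 1) - √N) / Q (n + 1) < 0 := by
      rw [h.conj_succ]; exact inv_lt_zero.2 (by linarith)
    have ha : (1 : ℝ) ≤ a (n + 1) := by
      rw [h.a_eq_floor, h.quot_succ]
      exact_mod_cast Int.le_floor.2 (by exact_mod_cast (h.irrational_quot n).one_lt_fractInv.le)
    linarith

lemma conj_succ_mem_Ioo (h : IsSqrtCFExpansion N a P Q) (n : ℕ) :
    (P (n + 1) - √N) / Q (n + 1) ∈ Set.Ioo (-1) 0 := by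
  rw [h.conj_succ]
  have := h.conj_sub_lt_neg_one n
  constructor
  · rw [lt_inv_of_neg (by norm_num) (by linarith)]; simpa using this
  · exact inv_lt_zero.2 (by linarith)

lemma rev_eq_fractInv (h : IsSqrtCFExpansion N a P Q) (n : ℕ) :
    (P (n + 1) + √N) / Q n = fractInv ((P (n + 2) + √N) / Q (n + 1)) := by
  have hs : √N ^ 2 = N := by simp
  obtain ⟨hlo, hhi⟩ := h.conj_succ_mem_Ioo n
  rw [h.add_div_eq_sub (√N) (n + 1), sub_eq_add_neg, fractInv_intCast_add,
    fractInv_of_mem_Ico ⟨by linarith, by linarith⟩, inv_neg, h.add_div_eq_neg_inv hs n]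

lemma iterate_fractInv_rev (h : IsSqrtCFExpansion N a P Q) (j k : ℕ) :
    fractInv^[j] ((P (k + j + 1) + √N) / Q (k + j)) = (P (k + 1) + √N) / Q k := by
  induction j with
  | zero => rfl
  | succ j ih => rw [Function.iterate_succ_apply, ← add_assoc, ← h.rev_eq_fractInv, ih]

lemma P_Q_period (h : IsSqrtCFExpansion N a P Q) {τ : ℕ}
    (hper : ∀ n, a (n + 1 + τ) = a (n + 1)) : P (τ + 1) = P 1 ∧ Q (τ + 1) = Q 1 := by
  refine h.irrational_sqrt.eq_of_add_div_eq_add_div (h.Q_ne_zero _) (h.Q_ne_zero _) ?_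
  refine eq_of_floor_iterate_fractInv_eq (h.irrational_quot _) (h.irrational_quot _) fun n => ?_
  rw [h.iterate_fractInv_quot, h.iterate_fractInv_quot, ← h.a_eq_floor, ← h.a_eq_floor]
  convert hper n using 2 <;> ring

lemma rev_period (h : IsSqrtCFExpansion N a P Q) {τ : ℕ}
    (hper : ∀ n, a (n + 1 + τ) = a (n + 1)) : (P (τ + 1) + √N) / Q τ = P 1 + √N := by
  have hs : √N ^ 2 = N := by simp
  obtain ⟨hP, hQ⟩ := h.P_Q_period hper
  rw [h.add_div_eq_neg_inv hs, hP, hQ, ← h.add_div_eq_neg_inv hs 0, h.Q_zero]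
  simp

theorem Q_eq_Q_period_sub (h : IsSqrtCFExpansion N a P Q) {τ : ℕ}
    (hper : ∀ n, a (n + 1 + τ) = a (n + 1)) {j : ℕ} (hj : j ≤ τ) : Q j = Q (τ - j) := by
  have key : ∀ j k, τ = k + j + 1 → Q (j + 1) = Q k := by
    rintro j k rfl
    have hrev := h.iterate_fractInv_rev (j + 1) k
    have hquot : fractInv^[j + 1] √N = (P (j + 1) + √N) / Q (j + 1) := by
      simpa [h.P_zero, h.Q_zero] using h.iterate_fractInv_quot (j + 1) 0
    rw [← add_assoc, h.rev_period hper, Function.iterate_succ_apply, fractInv_intCast_add,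
      ← Function.iterate_succ_apply, hquot] at hrev
    exact (h.irrational_sqrt.eq_of_add_div_eq_add_div (h.Q_ne_zero _) (h.Q_ne_zero _) hrev).2
  rcases j with _ | i
  · rcases τ with _ | t
    · rfl
    · exact (key t 0 (by ring)).symm
  · exact key i (τ - (i + 1)) (by omega)

lemma of_int {N : ℕ} (hNsq : ¬ IsSquare N) {a P Q : ℤ → ℤ} (hP0 : P 0 = 0) (hQ0 : Q 0 = 1)
    (ha : ∀ m : ℤ, 0 ≤ m → a m = ⌊((P m : ℝ) + √N) / Q m⌋)
    (hPrec : ∀ m : ℤ, 0 ≤ m → P (m + 1) = a m * Q m - P m)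
    (hQrec : ∀ m : ℤ, 0 ≤ m → Q (m + 1) * Q m = N - P (m + 1) ^ 2) :
    IsSqrtCFExpansion N (fun n : ℕ => a n) (fun n : ℕ => P n) (fun n : ℕ => Q n) where
  not_isSquare := hNsq
  P_zero := hP0
  Q_zero := hQ0
  a_eq_floor n := ha n n.cast_nonneg
  P_succ n := by exact_mod_cast hPrec n n.cast_nonneg
  Q_succ_mul n := by exact_mod_cast hQrec n n.cast_nonneg

end IsSqrtCFExpansion

theorem stmt_5_general
    (N : ℕ) (hNsq : ¬ IsSquare N)
    (a P Q : ℤ → ℤ)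
    (hP0 : P 0 = 0) (hQ0 : Q 0 = 1)
    (ha : ∀ m : ℤ, 0 ≤ m → a m = ⌊((P m : ℝ) + Real.sqrt N) / (Q m : ℝ)⌋)
    (hPrec : ∀ m : ℤ, 0 ≤ m → P (m + 1) = a m * Q m - P m)
    (hQrec : ∀ m : ℤ, 0 ≤ m → Q (m + 1) * Q m = (N : ℤ) - P (m + 1) ^ 2)
    (τ : ℕ)
    (hper : ∀ n : ℤ, 1 ≤ n → a (n + τ) = a n)
    :
    ∀ m : ℤ, 0 ≤ m → m ≤ (τ : ℤ) → Q m = Q ((τ : ℤ) - m) := by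
  have h := IsSqrtCFExpansion.of_int hNsq hP0 hQ0 ha hPrec hQrec
  have hper' (n : ℕ) : a ((n + 1 + τ : ℕ) : ℤ) = a ((n + 1 : ℕ) : ℤ) := by
    exact_mod_cast hper (n + 1) (by omega)
  intro m hm hmτ
  lift m to ℕ using hm
  have := h.Q_eq_Q_period_sub hper' (by omega : m ≤ τ)
  simpa [Nat.cast_sub (by omega : m ≤ τ)] using this

theorem stmt_5
    (N : ℕ) (hN : 0 < N) (hNsq : ¬ IsSquare N)
    (a P Q : ℤ → ℤ)
    (hP0 : P 0 = 0) (hQ0 : Q 0 = 1)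
    (ha : ∀ m : ℤ, 0 ≤ m → a m = ⌊((P m : ℝ) + Real.sqrt N) / (Q m : ℝ)⌋)
    (hPrec : ∀ m : ℤ, 0 ≤ m → P (m + 1) = a m * Q m - P m)
    (hQrec : ∀ m : ℤ, 0 ≤ m → Q (m + 1) * Q m = (N : ℤ) - P (m + 1) ^ 2)
    (τ : ℕ) (hτ : 0 < τ)
    (hper : ∀ n : ℤ, 1 ≤ n → a (n + τ) = a n)
    (hmin : ∀ τ' : ℕ, 0 < τ' → (∀ n : ℤ, 1 ≤ n → a (n + τ') = a n) → τ ≤ τ')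
    :
    ∀ m : ℤ, 0 ≤ m → m ≤ (τ : ℤ) → Q m = Q ((τ : ℤ) - m) :=
  stmt_5_general N hNsq a P Q hP0 hQ0 ha hPrec hQrec τ hper
end

section
/- Suppose N is composite and the period τ is odd. If −1 is a quadratic nonresidue modulo N (i.e. there is no integer x with x² ≡ −1 (mod N)), then gcd(N, Q_{(τ+1)/2}) > 1, so Q_{(τ+1)/2} contains a nontrivial factor of N. -/
lemma aux_floor_add (u v : ℤ) (f g : ℝ) (hf0 : 0 ≤ f) (hf1 : f < 1)
    (hg0 : 0 ≤ g) (hg1 : g < 1) (h : (u : ℝ) + f = v + g) : u = v ∧ f = g := by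
  have h1 : ⌊(u : ℝ) + f⌋ = u := by
    rw [add_comm, Int.floor_add_intCast]
    simp [Int.floor_eq_zero_iff, Set.mem_Ico, hf0, hf1]
  have h2 : ⌊(v : ℝ) + g⌋ = v := by
    rw [add_comm, Int.floor_add_intCast]
    simp [Int.floor_eq_zero_iff, Set.mem_Ico, hg0, hg1]
  have huv : u = v := by rw [← h1, ← h2, h]
  refine ⟨huv, ?_⟩
  have : (u : ℝ) = v := by exact_mod_cast huv
  linarith

lemma cf_unique (x y : ℕ → ℝ) (c : ℕ → ℤ) (hc : ∀ n, 1 ≤ c n)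
    (hx1 : ∀ n, 1 < x n) (hy1 : ∀ n, 1 < y n)
    (hx : ∀ n, x n = c n + 1 / x (n + 1)) (hy : ∀ n, y n = c n + 1 / y (n + 1)) :
    x 0 = y 0 := by
  have hxpos : ∀ n, 0 < x n := fun n => lt_trans one_pos (hx1 n)
  have hypos : ∀ n, 0 < y n := fun n => lt_trans one_pos (hy1 n)
  set d : ℕ → ℝ := fun n => |x n - y n| with hd
  have hdlt : ∀ n, d n < 1 := by
    intro n
    have h1 : 0 < 1 / x (n + 1) := one_div_pos.mpr (hxpos _)
    have h2 : 1 / x (n + 1) < 1 := by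
      rw [div_lt_one (hxpos _)]; exact hx1 _
    have h3 : 0 < 1 / y (n + 1) := one_div_pos.mpr (hypos _)
    have h4 : 1 / y (n + 1) < 1 := by
      rw [div_lt_one (hypos _)]; exact hy1 _
    have : x n - y n = 1 / x (n+1) - 1 / y (n+1) := by
      rw [hx n, hy n]; ring
    rw [hd]; simp only []
    rw [abs_sub_lt_iff]
    constructor <;> nlinarith
  have hrec : ∀ n, d n = d (n + 1) / (x (n+1) * y (n+1)) := by
    intro n
    have hxy : x (n+1) * y (n+1) > 0 := mul_pos (hxpos _) (hypos _)
    have hsub : 1 / x (n+1) - 1 / y (n+1) = (1 * y (n+1) - x (n+1) * 1) / (x (n+1) * y (n+1)) :=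
      div_sub_div 1 1 (ne_of_gt (hxpos _)) (ne_of_gt (hypos _))
    have : x n - y n = (y (n+1) - x (n+1)) / (x (n+1) * y (n+1)) := by
      rw [hx n, hy n]
      rw [show ((c n : ℝ) + 1 / x (n+1)) - ((c n : ℝ) + 1 / y (n+1)) = 1 / x (n+1) - 1 / y (n+1) by ring, hsub]
      ring_nf
    rw [hd]; simp only []
    rw [this, abs_div, abs_of_pos hxy, abs_sub_comm]
  have hgrow : ∀ n, 2 < x n * x (n + 1) := by
    intro n
    have h1 := hx1 (n + 1)
    have hcn : (1 : ℝ) ≤ c n := by exact_mod_cast hc n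
    have hxn : x n = c n + 1 / x (n+1) := hx n
    have hge : x n ≥ 1 + 1 / x (n + 1) := by
      rw [hxn]; have : 0 ≤ 1 / x (n+1) := le_of_lt (one_div_pos.mpr (hxpos _))
      linarith
    have hkey : (1 + 1 / x (n+1)) * x (n+1) = x (n+1) + 1 := by
      field_simp
    have := mul_le_mul_of_nonneg_right hge (le_of_lt (hxpos (n+1)))
    rw [hkey] at this
    linarith
  have hgrowy : ∀ n, 2 < y n * y (n + 1) := by
    intro n
    have h1 := hy1 (n + 1)
    have hcn : (1 : ℝ) ≤ c n := by exact_mod_cast hc n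
    have hyn : y n = c n + 1 / y (n+1) := hy n
    have hge : y n ≥ 1 + 1 / y (n + 1) := by
      rw [hyn]; have : 0 ≤ 1 / y (n+1) := le_of_lt (one_div_pos.mpr (hypos _))
      linarith
    have hkey : (1 + 1 / y (n+1)) * y (n+1) = y (n+1) + 1 := by
      field_simp
    have := mul_le_mul_of_nonneg_right hge (le_of_lt (hypos (n+1)))
    rw [hkey] at this
    linarith
  have hdnn : ∀ n, 0 ≤ d n := fun n => abs_nonneg _
  have hstep : ∀ n, d n ≤ d (n + 2) / 4 := by
    intro n
    have e1 := hrec n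
    have e2 := hrec (n + 1)
    have hx12 := hgrow (n + 1)
    have hy12 := hgrowy (n + 1)
    have p1 : 0 < x (n+1) * y (n+1) := mul_pos (hxpos _) (hypos _)
    have p2 : 0 < x (n+2) * y (n+2) := mul_pos (hxpos _) (hypos _)
    have : d n = d (n + 2) / ((x (n+1) * x (n+2)) * (y (n+1) * y (n+2))) := by
      rw [e1, e2, div_div]
      have : n + 1 + 1 = n + 2 := by ring
      rw [this]
      ring_nf
    rw [this]
    have h4 : (4 : ℝ) ≤ (x (n+1) * x (n+2)) * (y (n+1) * y (n+2)) := by nlinarith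
    exact div_le_div_of_nonneg_left (hdnn _) (by norm_num) h4
  have hbound : ∀ k, d 0 ≤ d (2 * k) / 4 ^ k := by
    intro k
    induction k with
    | zero => simp
    | succ k ih =>
      have h1 := hstep (2 * k)
      have : (2 * (k+1)) = 2 * k + 2 := by ring
      rw [this]
      have h2 : d (2*k) / 4 ^ k ≤ (d (2*k+2) / 4) / 4 ^ k := by
        gcongr
      calc d 0 ≤ d (2*k) / 4^k := ih
        _ ≤ (d (2*k+2)/4) / 4^k := h2
        _ = d (2*k+2) / 4^(k+1) := by rw [pow_succ]; ring
  have hfin : d 0 = 0 := by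
    by_contra hne
    have hpos : 0 < d 0 := lt_of_le_of_ne (hdnn 0) (Ne.symm hne)
    obtain ⟨k, hk⟩ := exists_pow_lt_of_lt_one hpos (by norm_num : (1:ℝ)/4 < 1)
    have := hbound k
    have h2 : d (2*k) / 4^k < d 0 := by
      calc d (2*k)/4^k ≤ 1 / 4^k := by gcongr; exact le_of_lt (hdlt _)
        _ = (1/4)^k := by rw [div_pow]; norm_num
        _ < d 0 := hk
    linarith
  have := abs_eq_zero.mp hfin
  linarith [sub_eq_zero.mp this]

set_option maxHeartbeats 1000000 in
theorem stmt_10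
    (N : ℕ) (hN : 0 < N) (hNsq : ¬ IsSquare N)
    (a P Q : ℤ → ℤ)
    (hP0 : P 0 = 0) (hQ0 : Q 0 = 1)
    (ha : ∀ m : ℤ, 0 ≤ m → a m = ⌊((P m : ℝ) + Real.sqrt N) / (Q m : ℝ)⌋)
    (hPrec : ∀ m : ℤ, 0 ≤ m → P (m + 1) = a m * Q m - P m)
    (hQrec : ∀ m : ℤ, 0 ≤ m → Q (m + 1) * Q m = (N : ℤ) - P (m + 1) ^ 2)
    (τ : ℕ) (hτ : 0 < τ)
    (hper : ∀ n : ℤ, 1 ≤ n → a (n + τ) = a n)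
    (hmin : ∀ τ' : ℕ, 0 < τ' → (∀ n : ℤ, 1 ≤ n → a (n + τ') = a n) → τ ≤ τ')
    (hN1 : 1 < N) (hcomp : ¬ N.Prime)
    (hτodd : Odd τ)
    (hnr : ¬ ∃ x : ℤ, x ^ 2 ≡ -1 [ZMOD (N : ℤ)])
    :
    1 < Int.gcd (N : ℤ) (Q (((τ + 1) / 2 : ℕ))) := by
  set s : ℝ := Real.sqrt N with hsdef
  have hN0 : (0:ℝ) ≤ (N:ℝ) := by positivity
  have hs2 : s ^ 2 = (N:ℝ) := Real.sq_sqrt hN0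
  have hspos : 0 < s := Real.sqrt_pos.mpr (by exact_mod_cast hN)
  have hs1 : 1 < s := by
    rw [hsdef, show (1:ℝ) = Real.sqrt 1 by simp]
    exact Real.sqrt_lt_sqrt (by norm_num) (by exact_mod_cast hN1)
  have hirr : Irrational s := irrational_sqrt_natCast_iff.mpr hNsq
  have hsne : ∀ z : ℤ, (z:ℝ) ≠ s := by
    intro z hz
    exact (hirr.ne_int z) hz.symm
  have hlin : ∀ z w : ℤ, (z:ℝ) * s = (w:ℝ) → z = 0 := by
    intro z w h
    by_contra hz
    apply hirr
    refine ⟨(w:ℚ)/(z:ℚ), ?_⟩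
    have hzR : (z:ℝ) ≠ 0 := by exact_mod_cast hz
    push_cast
    rw [eq_comm, eq_div_iff hzR, mul_comm]
    exact h
  -- basic facts about a 0
  have ha0 : a 0 = ⌊s⌋ := by
    have := ha 0 le_rfl
    rw [hP0, hQ0] at this
    simpa using this
  have ha0ge1 : 1  ≤ a 0 := by
    rw [ha0]
    exact Int.le_floor.mpr (by exact_mod_cast hs1.le)
  have ha0lt : (a 0 : ℝ) < s := by
    refine lt_of_le_of_ne ?_ (hsne _)
    rw [ha0]; exact Int.floor_le s
  have hP1 : P 1 = a 0 := by
    have := hPrec 0 le_rfl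
    rw [hP0, hQ0] at this
    simpa using this
  -- the step lemma
  have step : ∀ n : ℤ, 0 ≤ n → 1 ≤ Q n → (P n:ℝ) < s → 1 ≤ a n →
      (1 ≤ Q (n+1) ∧ ((Q (n+1):ℝ) < P (n+1) + s) ∧ ((P (n+1):ℝ) < s) ∧
       (s - (P (n+1):ℝ) < Q (n+1)) ∧ ((Q n:ℝ) < s + P (n+1))) := by
    intro n hn hQ hPlt hA
    have hQR : (0:ℝ) < Q n := by exact_mod_cast lt_of_lt_of_le zero_lt_one hQ
    have hfl := ha n hn
    set t : ℝ := ((P n:ℝ) + s)/(Q n:ℝ) with ht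
    have hfl1 : (a n : ℝ) ≤ t := by rw [hfl]; exact Int.floor_le t
    have hfl2 : t < (a n : ℝ) + 1 := by
      have h2 := Int.lt_floor_add_one t
      rw [← hfl] at h2
      exact_mod_cast h2
    have hPrR : ((P (n+1):ℝ)) = (a n:ℝ) * (Q n:ℝ) - (P n:ℝ) := by
      exact_mod_cast congrArg (fun z : ℤ => (z:ℝ)) (hPrec n hn)
    have key1 : s - (P (n+1):ℝ) = (Q n:ℝ) * (t - a n) := by
      rw [hPrR, ht]; field_simp; ring
    have hub : s - (P (n+1):ℝ) < Q n := by
      rw [key1]; nlinarith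
    have hlb0 : 0 ≤ s - (P (n+1):ℝ) := by
      rw [key1]; nlinarith
    have hlb : 0 < s - (P (n+1):ℝ) := by
      rcases lt_or_eq_of_le hlb0 with h | h
      · exact h
      · exact absurd (by linarith : (P (n+1):ℝ) = s) (hsne _)
    have hAR : (1:ℝ) ≤ (a n:ℝ) := by exact_mod_cast hA
    have hsum : (Q n:ℝ) < s + P (n+1) := by rw [hPrR]; nlinarith
    have hspp : (0:ℝ) < s + P (n+1) := lt_trans hQR hsum
    have hQrR : ((Q (n+1):ℝ)) * (Q n:ℝ) = (s - P (n+1)) * (s + P (n+1)) := by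
      have h0 : ((Q (n+1):ℝ)) * (Q n:ℝ) = (N:ℝ) - (P (n+1):ℝ)^2 := by
        exact_mod_cast congrArg (fun z : ℤ => (z:ℝ)) (hQrec n hn)
      rw [h0, ← hs2]; ring
    have hQ1posR : (0:ℝ) < (Q (n+1):ℝ) := by
      nlinarith [mul_pos hlb hspp]
    have hQ1 : 1 ≤ Q (n+1) := by
      have : (0:ℤ) < Q (n+1) := by exact_mod_cast hQ1posR
      omega
    refine ⟨hQ1, ?_, by linarith, ?_, hsum⟩
    · nlinarith [mul_lt_mul_of_pos_right hub hspp]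
    · nlinarith [mul_lt_mul_of_pos_left hsum hlb]
  -- a n ≥ 1 whenever the state is reduced-ish
  have hage : ∀ n : ℤ, 0 ≤ n → 1 ≤ Q n → (Q n:ℝ) < (P n:ℝ) + s → 1 ≤ a n := by
    intro n hn hQ hlt
    have hQR : (0:ℝ) < Q n := by exact_mod_cast lt_of_lt_of_le zero_lt_one hQ
    rw [ha n hn]
    refine Int.le_floor.mpr ?_
    rw [le_div_iff₀ hQR]
    push_cast
    linarith
  -- master induction
  have masterbase : (1 ≤ Q 1 ∧ ((Q 1:ℝ) < P 1 + s) ∧ ((P 1:ℝ) < s) ∧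
       (s - (P 1:ℝ) < Q 1) ∧ ((Q (1-1):ℝ) < s + P 1)) := by
    have h0 := step 0 le_rfl (by rw [hQ0]) (by rw [hP0]; exact_mod_cast hspos) ha0ge1
    norm_num at h0 ⊢
    exact h0
  have masterstep : ∀ n : ℤ, 1 ≤ n →
      (1 ≤ Q n ∧ ((Q n:ℝ) < P n + s) ∧ ((P n:ℝ) < s) ∧
       (s - (P n:ℝ) < Q n) ∧ ((Q (n-1):ℝ) < s + P n)) →
      (1 ≤ Q (n+1) ∧ ((Q (n+1):ℝ) < P (n+1) + s) ∧ ((P (n+1):ℝ) < s) ∧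
       (s - (P (n+1):ℝ) < Q (n+1)) ∧ ((Q (n+1-1):ℝ) < s + P (n+1))) := by
    intro n hn ih
    obtain ⟨h1, h2, h3, h4, h5⟩ := ih
    have hA : 1 ≤ a n := hage n (by linarith) h1 h2
    have h6 := step n (by linarith) h1 h3 hA
    have e : n + 1 - 1 = n := by ring
    rw [e]
    exact ⟨h6.1, h6.2.1, h6.2.2.1, h6.2.2.2.1, h6.2.2.2.2⟩
  have master : ∀ n : ℤ, 1 ≤ n →
      (1 ≤ Q n ∧ ((Q n:ℝ) < P n + s) ∧ ((P n:ℝ) < s) ∧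
       (s - (P n:ℝ) < Q n) ∧ ((Q (n-1):ℝ) < s + P n)) := by
    intro n hn
    exact Int.le_induction masterbase masterstep n hn
  have hQpos : ∀ n : ℤ, 0 ≤ n → 1 ≤ Q n := by
    intro n hn
    rcases eq_or_lt_of_le hn with h | h
    · rw [← h, hQ0]
    · exact (master n h).1
  have hQRpos : ∀ n : ℤ, 0 ≤ n → (0:ℝ) < (Q n:ℝ) := by
    intro n hn
    exact_mod_cast lt_of_lt_of_le zero_lt_one (hQpos n hn)
  have hsP : ∀ n : ℤ, 1 ≤ n → (0:ℝ) < s + (P n:ℝ) := by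
    intro n hn
    obtain ⟨h1, h2, _, _, _⟩ := master n hn
    have := hQRpos n (by linarith)
    linarith
  set ξ : ℤ → ℝ := fun n => ((P n : ℝ) + s) / (Q n : ℝ) with hξdef
  have hxigt1 : ∀ n : ℤ, 1 ≤ n → 1 < ξ n := by
    intro n hn
    obtain ⟨h1, h2, _, _, _⟩ := master n hn
    have hQR := hQRpos n (by linarith)
    rw [hξdef]
    exact (one_lt_div hQR).mpr h2
  have hxirec : ∀ n : ℤ, 0 ≤ n → ξ n = (a n : ℝ) + 1 / ξ (n+1) := by
    intro n hn
    have h1 := hQRpos n hn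
    have h2 := hQRpos (n+1) (by linarith)
    have h3 : (0:ℝ) < s + (P (n+1):ℝ) := hsP (n+1) (by linarith)
    have h3' : (0:ℝ) < (P (n+1):ℝ) + s := by linarith
    have hPrR : ((P (n+1):ℝ)) = (a n:ℝ) * (Q n:ℝ) - (P n:ℝ) := by
      exact_mod_cast congrArg (fun z : ℤ => (z:ℝ)) (hPrec n hn)
    have hQrR : ((Q (n+1):ℝ)) * (Q n:ℝ) = (s - P (n+1)) * (s + P (n+1)) := by
      have h0 : ((Q (n+1):ℝ)) * (Q n:ℝ) = (N:ℝ) - (P (n+1):ℝ)^2 := by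
        exact_mod_cast congrArg (fun z : ℤ => (z:ℝ)) (hQrec n hn)
      rw [h0, ← hs2]; ring
    show ((P n : ℝ) + s) / (Q n : ℝ) = (a n : ℝ) + 1 / (((P (n+1) : ℝ) + s) / (Q (n+1) : ℝ))
    rw [one_div_div]
    rw [div_eq_iff (ne_of_gt h1), add_mul, div_mul_eq_mul_div, hQrR,
      add_comm s ((P (n+1) : ℝ)), mul_div_cancel_right₀ _ (ne_of_gt h3')]
    linarith [hPrR]
  -- apply the uniqueness lemma to get periodicity of the complete quotients
  have hx0 : ξ 1 = ξ (1 + (τ:ℤ)) := by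
    have happ := cf_unique (fun k : ℕ => ξ (1 + (k:ℤ))) (fun k : ℕ => ξ (1 + (τ:ℤ) + (k:ℤ)))
      (fun k : ℕ => a (1 + (k:ℤ)))
      (fun k => hage (1 + (k:ℤ)) (by positivity) (master _ (by omega)).1
        (by have := (master (1 + (k:ℤ)) (by omega)).2.1; linarith))
      (fun k => hxigt1 _ (by omega))
      (fun k => hxigt1 _ (by omega))
      (fun k => by
        show ξ (1 + (k:ℤ)) = (a (1 + (k:ℤ)) : ℝ) + 1 / ξ (1 + ((k+1:ℕ):ℤ))
        have := hxirec (1 + (k:ℤ)) (by positivity)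
        rw [this]
        congr 2 <;> (push_cast; ring))
      (fun k => by
        show ξ (1 + (τ:ℤ) + (k:ℤ)) = (a (1 + (k:ℤ)) : ℝ) + 1 / ξ (1 + (τ:ℤ) + ((k+1:ℕ):ℤ))
        have h1 := hxirec (1 + (τ:ℤ) + (k:ℤ)) (by positivity)
        have h2 : a (1 + (τ:ℤ) + (k:ℤ)) = a (1 + (k:ℤ)) := by
          have := hper (1 + (k:ℤ)) (by omega)
          rw [← this]
          congr 1
          ring
        rw [h1, h2]
        congr 2 <;> (push_cast; ring))
    simpa using happ
  -- deduce P, Q periodicity at the base point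
  have hQP1 : Q (1 + (τ:ℤ)) = Q 1 ∧ P (1 + (τ:ℤ)) = P 1 := by
    have hQ1R := hQRpos 1 (by norm_num)
    have hQtR := hQRpos (1 + (τ:ℤ)) (by positivity)
    have hcross : ((P 1:ℝ) + s) * (Q (1 + (τ:ℤ)):ℝ) = ((P (1 + (τ:ℤ)):ℝ) + s) * (Q 1:ℝ) := by
      have := hx0
      rw [hξdef] at this
      simp only [] at this
      rw [div_eq_div_iff (ne_of_gt hQ1R) (ne_of_gt hQtR)] at this
      exact this
    have hz : Q (1 + (τ:ℤ)) - Q 1 = 0 := by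
      apply hlin (Q (1 + (τ:ℤ)) - Q 1) (P (1 + (τ:ℤ)) * Q 1 - P 1 * Q (1 + (τ:ℤ)))
      push_cast
      nlinarith [hcross]
    have hQeq : Q (1 + (τ:ℤ)) = Q 1 := by omega
    refine ⟨hQeq, ?_⟩
    have : ((P (1 + (τ:ℤ)):ℝ)) = (P 1:ℝ) := by
      rw [hQeq] at hcross
      have := mul_right_cancel₀ (ne_of_gt hQ1R) hcross
      linarith
    exact_mod_cast this
  have hPtau1 : P ((τ:ℤ) + 1) = a 0 := by
    rw [show (τ:ℤ) + 1 = 1 + (τ:ℤ) by ring, hQP1.2, hP1]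
  have hQtau1 : Q ((τ:ℤ) + 1) = Q 1 := by
    rw [show (τ:ℤ) + 1 = 1 + (τ:ℤ) by ring, hQP1.1]
  have hQ1ne : Q 1 ≠ 0 := by
    have := hQpos 1 (by norm_num)
    omega
  have hQτ : Q (τ:ℤ) = 1 := by
    have h1 := hQrec (τ:ℤ) (by positivity)
    have h0 := hQrec 0 le_rfl
    rw [hQtau1, hPtau1] at h1
    rw [hQ0] at h0
    norm_num at h0
    rw [hP1] at h0
    -- h1 : Q 1 * Q τ = N - a 0 ^ 2, h0 : Q 1 = N - a 0 ^ 2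
    have : Q 1 * Q (τ:ℤ) = Q 1 * 1 := by rw [h1, ← h0]; ring
    exact mul_left_cancel₀ hQ1ne this
  -- the mirrored sequence
  set η : ℕ → ℝ := fun j => ((P ((τ:ℤ) + 1 - (j:ℤ)) : ℝ) + s) / ((Q ((τ:ℤ) - (j:ℤ)) : ℝ)) with hηdef
  have hrev : ∀ j : ℕ, (j:ℤ) ≤ (τ:ℤ) - 1 →
      (η j = (a ((τ:ℤ) - (j:ℤ)) : ℝ) + 1 / η (j+1) ∧ 1 < η (j+1)) := by
    intro j hj
    set m : ℤ := (τ:ℤ) - (j:ℤ) with hm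
    have hm1 : 1 ≤ m := by omega
    have e1 : (τ:ℤ) + 1 - (j:ℤ) = m + 1 := by omega
    have e2 : (τ:ℤ) + 1 - ((j+1:ℕ):ℤ) = m := by push_cast; omega
    have e3 : (τ:ℤ) - ((j+1:ℕ):ℤ) = m - 1 := by push_cast; omega
    have hη1 : η j = ((P (m+1) : ℝ) + s) / ((Q m : ℝ)) := by
      rw [hηdef]; simp only []; rw [e1]
    have hη2 : η (j+1) = ((P m : ℝ) + s) / ((Q (m-1) : ℝ)) := by
      rw [hηdef]; simp only []; rw [e2, e3]
    have hQm : (0:ℝ) < (Q m : ℝ) := hQRpos m (by omega)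
    have hQm1 : (0:ℝ) < (Q (m-1) : ℝ) := hQRpos (m-1) (by omega)
    have hPm : (0:ℝ) < s + (P m : ℝ) := hsP m hm1
    have hPm' : (0:ℝ) < (P m : ℝ) + s := by linarith
    have hfct : (Q (m-1) : ℝ) < s + (P m : ℝ) := (master m hm1).2.2.2.2
    have hgt : 1 < η (j+1) := by
      rw [hη2]
      exact (one_lt_div hQm1).mpr (by linarith)
    refine ⟨?_, hgt⟩
    rw [hη1, hη2]
    have hPrR : ((P (m+1):ℝ)) = (a m:ℝ) * (Q m:ℝ) - (P m:ℝ) := by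
      exact_mod_cast congrArg (fun z : ℤ => (z:ℝ)) (hPrec m (by omega))
    have hQrR : ((Q (m-1):ℝ)) * (Q m:ℝ) = (s - P m) * (s + P m) := by
      have h0 := hQrec (m-1) (by omega)
      have e4 : m - 1 + 1 = m := by ring
      rw [e4] at h0
      have h0R : ((Q m:ℝ)) * (Q (m-1):ℝ) = (N:ℝ) - (P m:ℝ)^2 := by
        exact_mod_cast congrArg (fun z : ℤ => (z:ℝ)) h0
      nlinarith [h0R, hs2]
    rw [one_div_div]
    rw [div_eq_iff (ne_of_gt hQm), add_mul, div_mul_eq_mul_div, hQrR,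
      add_comm s ((P m : ℝ)), mul_div_cancel_right₀ _ (ne_of_gt hPm')]
    linarith [hPrR]
  -- base case of the symmetry
  have hbase : η 1 = ξ 1 := by
    have hrev0 := hrev 0 (by omega)
    have hη0 : η 0 = (a 0 : ℝ) + s := by
      rw [hηdef]; simp only []
      rw [show (τ:ℤ) + 1 - ((0:ℕ):ℤ) = (τ:ℤ) + 1 by push_cast; ring,
          show (τ:ℤ) - ((0:ℕ):ℤ) = (τ:ℤ) by push_cast; ring,
          hPtau1, hQτ]
      norm_num
    have hξ0 : ξ 0 = s := by
      rw [hξdef]; simp only []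
      rw [hP0, hQ0]
      norm_num
    have hξrec0 := hxirec 0 le_rfl
    rw [hξ0] at hξrec0
    norm_num at hξrec0
    rw [inv_eq_one_div] at hξrec0
    -- hξrec0 : s = a 0 + 1 / ξ 1
    have hcomb : (a ((τ:ℤ) - ((0:ℕ):ℤ)) : ℝ) + 1 / η 1 = ((a 0 + a 0 : ℤ) : ℝ) + 1 / ξ 1 := by
      rw [← hrev0.1, hη0]
      push_cast
      linarith [hξrec0]
    have hξ1 := hxigt1 1 le_rfl
    have hη1 := hrev0.2
    have hfl := aux_floor_add _ _ _ _
      (le_of_lt (one_div_pos.mpr (lt_trans one_pos hη1)))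
      (by rw [div_lt_one (lt_trans one_pos hη1)]; exact hη1)
      (le_of_lt (one_div_pos.mpr (lt_trans one_pos hξ1)))
      (by rw [div_lt_one (lt_trans one_pos hξ1)]; exact hξ1)
      hcomb
    have h12 := hfl.2
    rw [one_div, one_div] at h12
    exact inv_injective h12
  -- symmetry by induction
  have hsym : ∀ j : ℕ, 1 ≤ j → (j:ℤ) ≤ (τ:ℤ) → η j = ξ (j:ℤ) := by
    intro j
    induction j with
    | zero => intro h; exact absurd h (by norm_num)
    | succ j ih =>
      intro _ hle
      rcases Nat.eq_zero_or_pos j with hj0 | hjpos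
      · subst hj0
        have : ((0+1:ℕ):ℤ) = 1 := by norm_num
        rw [this]
        exact hbase
      · have hjτ : (j:ℤ) ≤ (τ:ℤ) - 1 := by push_cast at hle; omega
        have hrevj := hrev j hjτ
        have hih := ih hjpos (by omega)
        have hξj := hxirec (j:ℤ) (by positivity)
        have hξgt := hxigt1 ((j:ℤ)+1) (by omega)
        have hηgt := hrevj.2
        have hcomb : (a ((τ:ℤ) - (j:ℤ)) : ℝ) + 1 / η (j+1) = (a ((j:ℤ)) : ℝ) + 1 / ξ ((j:ℤ)+1) := by
          rw [← hrevj.1, hih, hξj]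
        have hfl := aux_floor_add _ _ _ _
          (le_of_lt (one_div_pos.mpr (lt_trans one_pos hηgt)))
          (by rw [div_lt_one (lt_trans one_pos hηgt)]; exact hηgt)
          (le_of_lt (one_div_pos.mpr (lt_trans one_pos hξgt)))
          (by rw [div_lt_one (lt_trans one_pos hξgt)]; exact hξgt)
          hcomb
        have h12 := hfl.2
        rw [one_div, one_div] at h12
        have heq2 := inv_injective h12
        rw [show (((j+1:ℕ)):ℤ) = (j:ℤ)+1 by push_cast; ring]
        exact heq2
  -- extract the half-period identity
  obtain ⟨tt, htt⟩ := hτodd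
  have hgoalidx : ((τ + 1) / 2 : ℕ) = tt + 1 := by omega
  have hsymh := hsym (tt+1) (by omega) (by push_cast; omega)
  rw [hηdef] at hsymh
  simp only [] at hsymh
  rw [show (τ:ℤ) + 1 - ((tt+1:ℕ):ℤ) = (tt:ℤ) + 1 by push_cast; omega,
      show (τ:ℤ) - ((tt+1:ℕ):ℤ) = (tt:ℤ) by push_cast; omega] at hsymh
  rw [hξdef] at hsymh
  simp only [] at hsymh
  rw [show ((tt+1:ℕ):ℤ) = (tt:ℤ) + 1 by push_cast; ring] at hsymh
  -- hsymh : (P (tt+1) + s)/Q tt = (P (tt+1) + s)/Q (tt+1)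
  set p : ℤ := P ((tt:ℤ)+1) with hp
  set q : ℤ := Q ((tt:ℤ)+1) with hq
  have hnum : (0:ℝ) < (p:ℝ) + s := by
    have := hsP ((tt:ℤ)+1) (by omega)
    rw [← hp] at this
    linarith
  have hQtt : (0:ℝ) < (Q (tt:ℤ) : ℝ) := hQRpos (tt:ℤ) (by positivity)
  have hQtt1 : (0:ℝ) < (q:ℝ) := by
    have := hQRpos ((tt:ℤ)+1) (by positivity)
    rw [← hq] at this
    exact this
  have hQsym : Q ((tt:ℤ)) = q := by
    have hcross : ((p:ℝ) + s) * (q:ℝ) = ((p:ℝ) + s) * (Q (tt:ℤ):ℝ) := by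
      rw [div_eq_div_iff (ne_of_gt hQtt) (ne_of_gt hQtt1)] at hsymh
      linarith [hsymh]
    have := mul_left_cancel₀ (ne_of_gt hnum) hcross
    exact_mod_cast this.symm
  have hqq := hQrec (tt:ℤ) (by positivity)
  rw [hQsym] at hqq
  have hsum : p^2 + q^2 = (N:ℤ) := by linear_combination hqq
  -- finale
  have ecast : (((τ+1)/2 : ℕ):ℤ) = (tt:ℤ) + 1 := by rw [hgoalidx]; push_cast; ring
  rw [ecast, ← hq]
  by_contra hcon
  push_neg at hcon
  have hcases : Int.gcd (N:ℤ) q = 0 ∨ Int.gcd (N:ℤ) q = 1 := by omega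
  rcases hcases with h | h
  · have h0 := (Int.gcd_eq_zero_iff.mp h).1
    have : N = 0 := by exact_mod_cast h0
    omega
  · have hco : IsCoprime (N:ℤ) q := Int.isCoprime_iff_gcd_eq_one.mpr h
    obtain ⟨u, v, huv⟩ := hco
    refine hnr ⟨p * v, Int.modEq_iff_dvd.mpr ⟨-v^2 - u*(q*v+1), ?_⟩⟩
    linear_combination (-v^2) * hsum + (q*v+1) * huv
end
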